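/- arXiv:2602.00614 — 9 statements merged into one kernel-verified Lean document; each statement's English description precedes it below -/
import Mathlib

section
/- Let P be a commutative post-Lie algebra over ℂ. Then for all x, y, z, w ∈ P the medial identity holds: (x·y)·(z·w) = (x·z)·(y·w). -/
set_option maxHeartbeats 4000000

/-- **Medial identity in commutative post-Lie algebras.**
If `P` is a commutative post-Lie algebra over `ℂ` (a `ℂ`-vector space with a
commutative bilinear multiplication `mul` and a Lie bracket `br` satisfying the
post-Lie identities), then `(x·y)·(z·w) = (x·z)·(y·w)` for all `x y z w`. -/
theorem cpa_medial {P : Type*} [AddCommGroup P] [Module ℂ P]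
    (mul br : P →ₗ[ℂ] P →ₗ[ℂ] P)
    (hcomm : ∀ x y : P, mul x y = mul y x)
    (halt : ∀ x : P, br x x = 0)
    (hjac : ∀ x y z : P, br (br x y) z + br (br y z) x + br (br z x) y = 0)
    (hpl1 : ∀ x y z : P, mul (br x y) z = mul x (mul y z) - mul y (mul x z))
    (hpl2 : ∀ x y z : P, mul x (br y z) = br (mul x y) z + br y (mul x z)) :
    ∀ x y z w : P, mul (mul x y) (mul z w) = mul (mul x z) (mul y w) := by
  intro x y z w
  have hanti : ∀ a b : P, br a b = - br b a := by
    intro a b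
    have h := halt (a + b)
    simp only [map_add, LinearMap.add_apply, halt, zero_add, add_zero] at h
    exact eq_neg_of_add_eq_zero_right h
  have hjac' : ∀ a b c : P, br (br a b) c = -br (br b c) a - br (br c a) b := by
    intro a b c
    have h := hjac a b c
    rw [← sub_eq_zero, ← h]
    try abel
  have h0 : (mul (mul x y) (mul z w)) = (mul (mul y x) (mul z w)) := by rw [hcomm x y]
  have h1 : (mul z (br (mul y w) x)) = (mul z (br (mul w y) x)) := by rw [hcomm y w]
  have h2 : (mul (mul x z) (mul y w)) = (mul (mul z x) (mul y w)) := by rw [hcomm x z]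
  have h3 : (br (mul w y) (mul x z)) = (br (mul w y) (mul z x)) := by rw [hcomm x z]
  have h4 : (br (mul w z) (mul x y)) = (br (mul w z) (mul y x)) := by rw [hcomm x y]
  have h5 : (mul (br w (mul x z)) y) = (mul (br w (mul z x)) y) := by rw [hcomm x z]
  have h6 : (mul (br (mul x w) z) y) = (mul (br (mul w x) z) y) := by rw [hcomm x w]
  have h7 : (br (mul w (mul x y)) z) = (br (mul w (mul y x)) z) := by rw [hcomm x y]
  have h8 : (br (mul w (mul x z)) y) = (br (mul w (mul z x)) y) := by rw [hcomm x z]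
  have h9 : (br (mul y (mul z w)) x) = (br (mul y (mul w z)) x) := by rw [hcomm z w]
  have h10 : (br (mul z (mul y w)) x) = (br (mul z (mul w y)) x) := by rw [hcomm y w]
  have h11 : (mul y (mul x (mul z w))) = (mul y (mul x (mul w z))) := by rw [hcomm z w]
  have h12 : (mul y (mul z (mul x w))) = (mul y (mul z (mul w x))) := by rw [hcomm x w]
  have h13 : (mul z (mul w (mul x y))) = (mul z (mul w (mul y x))) := by rw [hcomm x y]
  have h14 : (br w (mul (mul y x) z)) = (br w (mul z (mul y x))) := by rw [hcomm (mul y x) z]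
  have h15 : (br (mul (mul y x) w) z) = (br (mul w (mul y x)) z) := by rw [hcomm (mul y x) w]
  have h16 : (mul (mul x (br w z)) y) = (mul (mul (br w z) x) y) := by rw [hcomm x (br w z)]
  have h17 : (mul y (br (mul w x) z)) = (mul y (-br z (mul w x))) := by rw [hanti (mul w x) z]
  have h18 : (mul y (mul (mul z x) w)) = (mul y (mul w (mul z x))) := by rw [hcomm (mul z x) w]
  have h19 : (mul y (mul x (mul w z))) = (mul y (mul (mul w z) x)) := by rw [hcomm x (mul w z)]
  have h20 : (mul (mul y x) (mul z w)) = (mul (mul y x) (mul w z)) := by rw [hcomm z w]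
  have h21 : (mul (mul y x) (br w z)) = (mul (br w z) (mul y x)) := by rw [hcomm (mul y x) (br w z)]
  have h22 : (mul z (mul x (mul w y))) = (mul z (mul (mul w y) x)) := by rw [hcomm x (mul w y)]
  have h23 : (mul (mul z x) (mul y w)) = (mul (mul z x) (mul w y)) := by rw [hcomm y w]
  have h24 : (mul w (mul (mul y x) z)) = (mul w (mul z (mul y x))) := by rw [hcomm (mul y x) z]
  have h25 : (br (mul y w) (mul z x)) = (br (mul w y) (mul z x)) := by rw [hcomm y w]
  have h26 : (mul (mul (br w z) x) y) = (mul y (mul (br w z) x)) := by rw [hcomm (mul (br w z) x) y]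
  have h27 : (mul y (mul (br z x) w)) = (mul y (mul w (br z x))) := by rw [hcomm (br z x) w]
  have h28 : (mul z (mul (br w x) y)) = (mul z (mul y (br w x))) := by rw [hcomm (br w x) y]
  have h29 : (mul y (mul (br w z) x)) = (mul y (mul w (mul z x) - mul z (mul w x))) := by rw [hpl1 w z x]
  have h30 : (mul (br w (mul z x)) y) = (mul y (br w (mul z x))) := by rw [hcomm (br w (mul z x)) y]
  have h31 : (mul y (mul w (br z x))) = (mul y (br (mul w z) x + br z (mul w x))) := by rw [hpl2 w z x]
  have h32 : (mul (mul y x) (mul w z)) = (mul (mul w z) (mul y x)) := by rw [hcomm (mul y x) (mul w z)]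
  have h33 : (mul z (mul (br w x) y)) = (mul z (mul w (mul x y) - mul x (mul w y))) := by rw [hpl1 w x y]
  have h34 : (mul (br w (mul y x)) z) = (mul z (br w (mul y x))) := by rw [hcomm (br w (mul y x)) z]
  have h35 : (br (mul (br w x) y) z) = (-br z (mul (br w x) y)) := by rw [hanti (mul (br w x) y) z]
  have h36 : (mul (mul z x) (mul w y)) = (mul (mul w y) (mul z x)) := by rw [hcomm (mul z x) (mul w y)]
  have h37 : (br (mul z x) (mul w y)) = (-br (mul w y) (mul z x)) := by rw [hanti (mul z x) (mul w y)]
  have h38 : (mul (br w x) (br z y)) = (mul (br z y) (br w x)) := by rw [hcomm (br w x) (br z y)]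
  have h39 : (mul (br (mul z x) y) w) = (mul w (br (mul z x) y)) := by rw [hcomm (br (mul z x) y) w]
  have h40 : (br w (mul (br z y) x)) = (br w (mul z (mul y x) - mul y (mul z x))) := by rw [hpl1 z y x]
  have h41 : (mul w (br (mul z x) y)) = (br (mul w (mul z x)) y + br (mul z x) (mul w y)) := by rw [hpl2 w (mul z x) y]
  have h42 : (mul (br w x) (br z y)) = (br (mul (br w x) z) y + br z (mul (br w x) y)) := by rw [hpl2 (br w x) z y]
  have h43 : (mul (br (mul w y) z) x) = (mul (mul w y) (mul z x) - mul z (mul (mul w y) x)) := by rw [hpl1 (mul w y) z x]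
  have h44 : (br (mul (br w x) y) z) = (br (mul w (mul x y) - mul x (mul w y)) z) := by rw [hpl1 w x y]
  have h45 : (mul (br w (mul y x)) z) = (mul w (mul (mul y x) z) - mul (mul y x) (mul w z)) := by rw [hpl1 w (mul y x) z]
  have h46 : (mul z (br (mul w y) x)) = (br (mul z (mul w y)) x + br (mul w y) (mul z x)) := by rw [hpl2 z (mul w y) x]
  have h47 : (br (mul (br w x) z) y) = (br (mul w (mul x z) - mul x (mul w z)) y) := by rw [hpl1 w x z]
  have h48 : (mul (mul x (br w z)) y) = (mul (br (mul x w) z + br w (mul x z)) y) := by rw [hpl2 x w z]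
  have h49 : (mul y (br (mul w z) x)) = (br (mul y (mul w z)) x + br (mul w z) (mul y x)) := by rw [hpl2 y (mul w z) x]
  have h50 : (mul x (br (mul w z) y)) = (mul (br (mul w z) y) x) := by rw [hcomm x (br (mul w z) y)]
  have h51 : (mul (br (mul w z) y) x) = (mul (mul w z) (mul y x) - mul y (mul (mul w z) x)) := by rw [hpl1 (mul w z) y x]
  have h52 : (mul (mul y x) (br w z)) = (br (mul (mul y x) w) z + br w (mul (mul y x) z)) := by rw [hpl2 (mul y x) w z]
  have h53 : (mul x (br (mul w y) z)) = (mul (br (mul w y) z) x) := by rw [hcomm x (br (mul w y) z)]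
  have h54 : (mul (br (mul w x) z) y) = (mul y (br (mul w x) z)) := by rw [hcomm (br (mul w x) z) y]
  have h55 : (mul x (br (mul w y) z)) = (br (mul x (mul w y)) z + br (mul w y) (mul x z)) := by rw [hpl2 x (mul w y) z]
  have h56 : (mul (br z y) (br w x)) = (br (mul (br z y) w) x + br w (mul (br z y) x)) := by rw [hpl2 (br z y) w x]
  have h57 : (mul y (mul (br z x) w)) = (mul y (mul z (mul x w) - mul x (mul z w))) := by rw [hpl1 z x w]
  have h58 : (mul (br (mul z x) y) w) = (mul (mul z x) (mul y w) - mul y (mul (mul z x) w)) := by rw [hpl1 (mul z x) y w]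
  have h59 : (mul y (br w (mul z x))) = (br (mul y w) (mul z x) + br w (mul y (mul z x))) := by rw [hpl2 y w (mul z x)]
  have h60 : (mul (br w z) (mul y x)) = (mul w (mul z (mul y x)) - mul z (mul w (mul y x))) := by rw [hpl1 w z (mul y x)]
  have h61 : (mul z (mul y (br w x))) = (mul z (br (mul y w) x + br w (mul y x))) := by rw [hpl2 y w x]
  have h62 : (br (mul (br z y) w) x) = (br (mul z (mul y w) - mul y (mul z w)) x) := by rw [hpl1 z y w]
  have h63 : (mul x (br (mul w z) y)) = (br (mul x (mul w z)) y + br (mul w z) (mul x y)) := by rw [hpl2 x (mul w z) y]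
  have z0 := sub_eq_zero_of_eq h0
  have z1 := sub_eq_zero_of_eq h1
  have z2 := sub_eq_zero_of_eq h2
  have z3 := sub_eq_zero_of_eq h3
  have z4 := sub_eq_zero_of_eq h4
  have z5 := sub_eq_zero_of_eq h5
  have z6 := sub_eq_zero_of_eq h6
  have z7 := sub_eq_zero_of_eq h7
  have z8 := sub_eq_zero_of_eq h8
  have z9 := sub_eq_zero_of_eq h9
  have z10 := sub_eq_zero_of_eq h10
  have z11 := sub_eq_zero_of_eq h11
  have z12 := sub_eq_zero_of_eq h12
  have z13 := sub_eq_zero_of_eq h13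
  have z14 := sub_eq_zero_of_eq h14
  have z15 := sub_eq_zero_of_eq h15
  have z16 := sub_eq_zero_of_eq h16
  have z17 := sub_eq_zero_of_eq h17
  have z18 := sub_eq_zero_of_eq h18
  have z19 := sub_eq_zero_of_eq h19
  have z20 := sub_eq_zero_of_eq h20
  have z21 := sub_eq_zero_of_eq h21
  have z22 := sub_eq_zero_of_eq h22
  have z23 := sub_eq_zero_of_eq h23
  have z24 := sub_eq_zero_of_eq h24
  have z25 := sub_eq_zero_of_eq h25
  have z26 := sub_eq_zero_of_eq h26
  have z27 := sub_eq_zero_of_eq h27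
  have z28 := sub_eq_zero_of_eq h28
  have z29 := sub_eq_zero_of_eq h29
  have z30 := sub_eq_zero_of_eq h30
  have z31 := sub_eq_zero_of_eq h31
  have z32 := sub_eq_zero_of_eq h32
  have z33 := sub_eq_zero_of_eq h33
  have z34 := sub_eq_zero_of_eq h34
  have z35 := sub_eq_zero_of_eq h35
  have z36 := sub_eq_zero_of_eq h36
  have z37 := sub_eq_zero_of_eq h37
  have z38 := sub_eq_zero_of_eq h38
  have z39 := sub_eq_zero_of_eq h39
  have z40 := sub_eq_zero_of_eq h40
  have z41 := sub_eq_zero_of_eq h41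
  have z42 := sub_eq_zero_of_eq h42
  have z43 := sub_eq_zero_of_eq h43
  have z44 := sub_eq_zero_of_eq h44
  have z45 := sub_eq_zero_of_eq h45
  have z46 := sub_eq_zero_of_eq h46
  have z47 := sub_eq_zero_of_eq h47
  have z48 := sub_eq_zero_of_eq h48
  have z49 := sub_eq_zero_of_eq h49
  have z50 := sub_eq_zero_of_eq h50
  have z51 := sub_eq_zero_of_eq h51
  have z52 := sub_eq_zero_of_eq h52
  have z53 := sub_eq_zero_of_eq h53
  have z54 := sub_eq_zero_of_eq h54
  have z55 := sub_eq_zero_of_eq h55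
  have z56 := sub_eq_zero_of_eq h56
  have z57 := sub_eq_zero_of_eq h57
  have z58 := sub_eq_zero_of_eq h58
  have z59 := sub_eq_zero_of_eq h59
  have z60 := sub_eq_zero_of_eq h60
  have z61 := sub_eq_zero_of_eq h61
  have z62 := sub_eq_zero_of_eq h62
  have z63 := sub_eq_zero_of_eq h63
  have e : mul (mul x y) (mul z w) - mul (mul x z) (mul y w) =
      ((mul (mul x y) (mul z w)) - (mul (mul y x) (mul z w))) +
        (1/2 : ℂ) • ((mul z (br (mul y w) x)) - (mul z (br (mul w y) x))) +
        -((mul (mul x z) (mul y w)) - (mul (mul z x) (mul y w))) +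
        (-1/2 : ℂ) • ((br (mul w y) (mul x z)) - (br (mul w y) (mul z x))) +
        (1/2 : ℂ) • ((br (mul w z) (mul x y)) - (br (mul w z) (mul y x))) +
        (-1/2 : ℂ) • ((mul (br w (mul x z)) y) - (mul (br w (mul z x)) y)) +
        (-1/2 : ℂ) • ((mul (br (mul x w) z) y) - (mul (br (mul w x) z) y)) +
        (-1/2 : ℂ) • ((br (mul w (mul x y)) z) - (br (mul w (mul y x)) z)) +
        (1/2 : ℂ) • ((br (mul w (mul x z)) y) - (br (mul w (mul z x)) y)) +
        (1/2 : ℂ) • ((br (mul y (mul z w)) x) - (br (mul y (mul w z)) x)) +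
        (-1/2 : ℂ) • ((br (mul z (mul y w)) x) - (br (mul z (mul w y)) x)) +
        (-1/2 : ℂ) • ((mul y (mul x (mul z w))) - (mul y (mul x (mul w z)))) +
        (1/2 : ℂ) • ((mul y (mul z (mul x w))) - (mul y (mul z (mul w x)))) +
        (-1/2 : ℂ) • ((mul z (mul w (mul x y))) - (mul z (mul w (mul y x)))) +
        (1/2 : ℂ) • ((br w (mul (mul y x) z)) - (br w (mul z (mul y x)))) +
        (1/2 : ℂ) • ((br (mul (mul y x) w) z) - (br (mul w (mul y x)) z)) +
        (1/2 : ℂ) • ((mul (mul x (br w z)) y) - (mul (mul (br w z) x) y)) +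
        (-1/2 : ℂ) • ((mul y (br (mul w x) z)) - (mul y (-br z (mul w x)))) +
        (-1/2 : ℂ) • ((mul y (mul (mul z x) w)) - (mul y (mul w (mul z x)))) +
        (-1/2 : ℂ) • ((mul y (mul x (mul w z))) - (mul y (mul (mul w z) x))) +
        ((mul (mul y x) (mul z w)) - (mul (mul y x) (mul w z))) +
        (-1/2 : ℂ) • ((mul (mul y x) (br w z)) - (mul (br w z) (mul y x))) +
        (1/2 : ℂ) • ((mul z (mul x (mul w y))) - (mul z (mul (mul w y) x))) +
        (-1/2 : ℂ) • ((mul (mul z x) (mul y w)) - (mul (mul z x) (mul w y))) +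
        (1/2 : ℂ) • ((mul w (mul (mul y x) z)) - (mul w (mul z (mul y x)))) +
        (-1/2 : ℂ) • ((br (mul y w) (mul z x)) - (br (mul w y) (mul z x))) +
        (1/2 : ℂ) • ((mul (mul (br w z) x) y) - (mul y (mul (br w z) x))) +
        (-1/2 : ℂ) • ((mul y (mul (br z x) w)) - (mul y (mul w (br z x)))) +
        (1/2 : ℂ) • ((mul z (mul (br w x) y)) - (mul z (mul y (br w x)))) +
        (1/2 : ℂ) • ((mul y (mul (br w z) x)) - (mul y (mul w (mul z x) - mul z (mul w x)))) +
        (-1/2 : ℂ) • ((mul (br w (mul z x)) y) - (mul y (br w (mul z x)))) +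
        (-1/2 : ℂ) • ((mul y (mul w (br z x))) - (mul y (br (mul w z) x + br z (mul w x)))) +
        (1/2 : ℂ) • ((mul (mul y x) (mul w z)) - (mul (mul w z) (mul y x))) +
        (-1/2 : ℂ) • ((mul z (mul (br w x) y)) - (mul z (mul w (mul x y) - mul x (mul w y)))) +
        (-1/2 : ℂ) • ((mul (br w (mul y x)) z) - (mul z (br w (mul y x)))) +
        (1/2 : ℂ) • ((br (mul (br w x) y) z) - (-br z (mul (br w x) y))) +
        (-1/2 : ℂ) • ((mul (mul z x) (mul w y)) - (mul (mul w y) (mul z x))) +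
        (-1/2 : ℂ) • ((br (mul z x) (mul w y)) - (-br (mul w y) (mul z x))) +
        (-1/2 : ℂ) • ((mul (br w x) (br z y)) - (mul (br z y) (br w x))) +
        (-1/2 : ℂ) • ((mul (br (mul z x) y) w) - (mul w (br (mul z x) y))) +
        (-1/2 : ℂ) • ((br w (mul (br z y) x)) - (br w (mul z (mul y x) - mul y (mul z x)))) +
        (-1/2 : ℂ) • ((mul w (br (mul z x) y)) - (br (mul w (mul z x)) y + br (mul z x) (mul w y))) +
        (1/2 : ℂ) • ((mul (br w x) (br z y)) - (br (mul (br w x) z) y + br z (mul (br w x) y))) +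
        (1/2 : ℂ) • ((mul (br (mul w y) z) x) - (mul (mul w y) (mul z x) - mul z (mul (mul w y) x))) +
        (-1/2 : ℂ) • ((br (mul (br w x) y) z) - (br (mul w (mul x y) - mul x (mul w y)) z)) +
        (1/2 : ℂ) • ((mul (br w (mul y x)) z) - (mul w (mul (mul y x) z) - mul (mul y x) (mul w z))) +
        (1/2 : ℂ) • ((mul z (br (mul w y) x)) - (br (mul z (mul w y)) x + br (mul w y) (mul z x))) +
        (1/2 : ℂ) • ((br (mul (br w x) z) y) - (br (mul w (mul x z) - mul x (mul w z)) y)) +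
        (-1/2 : ℂ) • ((mul (mul x (br w z)) y) - (mul (br (mul x w) z + br w (mul x z)) y)) +
        (-1/2 : ℂ) • ((mul y (br (mul w z) x)) - (br (mul y (mul w z)) x + br (mul w z) (mul y x))) +
        (-1/2 : ℂ) • ((mul x (br (mul w z) y)) - (mul (br (mul w z) y) x)) +
        (-1/2 : ℂ) • ((mul (br (mul w z) y) x) - (mul (mul w z) (mul y x) - mul y (mul (mul w z) x))) +
        (1/2 : ℂ) • ((mul (mul y x) (br w z)) - (br (mul (mul y x) w) z + br w (mul (mul y x) z))) +
        (1/2 : ℂ) • ((mul x (br (mul w y) z)) - (mul (br (mul w y) z) x)) +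
        (-1/2 : ℂ) • ((mul (br (mul w x) z) y) - (mul y (br (mul w x) z))) +
        (-1/2 : ℂ) • ((mul x (br (mul w y) z)) - (br (mul x (mul w y)) z + br (mul w y) (mul x z))) +
        (-1/2 : ℂ) • ((mul (br z y) (br w x)) - (br (mul (br z y) w) x + br w (mul (br z y) x))) +
        (1/2 : ℂ) • ((mul y (mul (br z x) w)) - (mul y (mul z (mul x w) - mul x (mul z w)))) +
        (1/2 : ℂ) • ((mul (br (mul z x) y) w) - (mul (mul z x) (mul y w) - mul y (mul (mul z x) w))) +
        (-1/2 : ℂ) • ((mul y (br w (mul z x))) - (br (mul y w) (mul z x) + br w (mul y (mul z x)))) +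
        (-1/2 : ℂ) • ((mul (br w z) (mul y x)) - (mul w (mul z (mul y x)) - mul z (mul w (mul y x)))) +
        (1/2 : ℂ) • ((mul z (mul y (br w x))) - (mul z (br (mul y w) x + br w (mul y x)))) +
        (-1/2 : ℂ) • ((br (mul (br z y) w) x) - (br (mul z (mul y w) - mul y (mul z w)) x)) +
        (1/2 : ℂ) • ((mul x (br (mul w z) y)) - (br (mul x (mul w z)) y + br (mul w z) (mul x y))) := by
    simp only [map_add, map_sub, map_neg, LinearMap.add_apply, LinearMap.sub_apply,
      LinearMap.neg_apply]
    module
  rw [z0, z1, z2, z3, z4, z5, z6, z7, z8, z9, z10, z11, z12, z13, z14, z15, z16, z17, z18, z19, z20, z21, z22, z23, z24, z25, z26, z27, z28, z29, z30, z31, z32, z33, z34, z35, z36, z37, z38, z39, z40, z41, z42, z43, z44, z45, z46, z47, z48, z49, z50, z51, z52, z53, z54, z55, z56, z57, z58, z59, z60, z61, z62, z63] at e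
  simp only [smul_zero, neg_zero, add_zero, zero_add] at e
  exact sub_eq_zero.mp e
end

section
/- Let P be a commutative post-Lie algebra over ℂ. Then for all x, y, z, w ∈ P: ((x·y)·z)·w = ((x·y)·w)·z. -/
set_option maxHeartbeats 4000000

/-- In a commutative post-Lie algebra over ℂ, `((x·y)·z)·w = ((x·y)·w)·z`. -/
theorem cpa_prod_right_symm {P : Type*} [AddCommGroup P] [Module ℂ P]
    (mul br : P →ₗ[ℂ] P →ₗ[ℂ] P)
    (hcomm : ∀ x y : P, mul x y = mul y x)
    (halt : ∀ x : P, br x x = 0)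
    (hjac : ∀ x y z : P, br (br x y) z + br (br y z) x + br (br z x) y = 0)
    (hpl1 : ∀ x y z : P, mul (br x y) z = mul x (mul y z) - mul y (mul x z))
    (hpl2 : ∀ x y z : P, mul x (br y z) = br (mul x y) z + br y (mul x z)) :
    ∀ x y z w : P, mul (mul (mul x y) z) w = mul (mul (mul x y) w) z := by
  have hanti : ∀ a b : P, br a b + br b a = 0 := by
    intro a b
    have h := halt (a + b)
    simp only [map_add, LinearMap.add_apply, halt, zero_add, add_zero] at h
    rw [add_comm]; exact h
  have cmulL : ∀ (e : P) {a b : P}, a = b → mul a e = mul b e := by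
    intro e a b h; rw [h]
  have cbrL : ∀ (e : P) {a b : P}, a = b → br a e = br b e := by
    intro e a b h; rw [h]
  have hDmulL : ∀ a b c e : P,
      mul (mul (br a b) c) e = mul (mul a (mul b c)) e - mul (mul b (mul a c)) e := by
    intro a b c e; rw [hpl1, map_sub, LinearMap.sub_apply]
  have hDbrL : ∀ a b c e : P,
      br (mul (br a b) c) e = br (mul a (mul b c)) e - br (mul b (mul a c)) e := by
    intro a b c e; rw [hpl1, map_sub, LinearMap.sub_apply]
  have hEmulL : ∀ a b c e : P,
      mul (mul a (br b c)) e = mul (br (mul a b) c) e + mul (br b (mul a c)) e := by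
    intro a b c e; rw [hpl2, map_add, LinearMap.add_apply]
  have hEbrL : ∀ a b c e : P,
      br (mul a (br b c)) e = br (br (mul a b) c) e + br (br b (mul a c)) e := by
    intro a b c e; rw [hpl2, map_add, LinearMap.add_apply]
  intro x y z w
  linear_combination (norm := module)
      - (1/2 : ℂ) • (hpl2 w (mul x y) z) + (1/2 : ℂ) • (hcomm w (br (mul x y) z)) - (1/2 : ℂ) • (hpl2 w z (mul x y)) 
      - (1/2 : ℂ) • (hanti z (mul w (mul x y))) + (1/2 : ℂ) • (hcomm w (br z (mul x y))) - (1/2 : ℂ) • (hanti (mul x y) (mul w z)) 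
      - (1/2 : ℂ) • (hpl1 w (mul y z) x) - (1/2 : ℂ) • (hcomm w (mul (mul y z) x)) - (1/2 : ℂ) • (hcomm (mul w x) (mul y z)) 
      + (1/2 : ℂ) • (hpl2 x w (mul y z)) - (1/2 : ℂ) • (hcomm x (br w (mul y z))) + (1/2 : ℂ) • (hanti w (mul x (mul y z))) 
      + (1/2 : ℂ) • (hanti (mul x w) (mul y z)) - (1/2 : ℂ) • (cmulL (mul y z) (hcomm x w)) + (hDmulL y z x w) 
      + (cmulL w (hcomm y (mul z x))) + (1/2 : ℂ) • (cmulL z (hcomm w (mul x y))) - (cmulL w (cmulL y (hcomm x z))) 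
      + (1/2 : ℂ) • (hcomm (mul x y) (mul w z)) + (1/2 : ℂ) • (hDbrL x y z w) - (1/2 : ℂ) • (hcomm z (mul w (br x y))) 
      + (1/2 : ℂ) • (hcomm w (mul z (br x y))) + (cmulL z (hcomm y (mul x w))) + (1/2 : ℂ) • (hpl2 y z (mul x w)) 
      - (1/2 : ℂ) • (hcomm y (br z (mul x w))) + (1/2 : ℂ) • (hanti z (mul y (mul x w))) + (1/2 : ℂ) • (cmulL (mul y w) (hcomm x z)) 
      + (1/2 : ℂ) • (hpl1 z (mul y w) x) + (1/2 : ℂ) • (hcomm z (mul (mul y w) x)) + (1/2 : ℂ) • (hcomm (mul z x) (mul y w)) 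
      - (1/2 : ℂ) • (hpl2 x z (mul y w)) + (1/2 : ℂ) • (hcomm x (br z (mul y w))) - (1/2 : ℂ) • (hanti z (mul x (mul y w))) 
      - (1/2 : ℂ) • (hDbrL x y w z) + (1/2 : ℂ) • (hpl2 (br x y) z w) + (1/2 : ℂ) • (hanti z (mul (br x y) w)) 
      - (1/2 : ℂ) • (hcomm (br x y) (br z w)) - (1/2 : ℂ) • (hpl1 z w (br x y)) + (1/2 : ℂ) • (hpl1 z (mul x y) w) 
      + (1/2 : ℂ) • (hcomm z (mul (mul x y) w)) - (1/2 : ℂ) • (hcomm (mul x y) (mul z w)) - (1/2 : ℂ) • (cmulL (mul x y) (hcomm z w)) 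
      - (1/2 : ℂ) • (hEmulL x y z w) + (1/2 : ℂ) • (cmulL w (hcomm x (br y z))) + (1/2 : ℂ) • (hEmulL x z w y) 
      + (1/2 : ℂ) • (hpl2 y (mul x z) w) - (1/2 : ℂ) • (hcomm y (br (mul x z) w)) - (1/2 : ℂ) • (cmulL y (hcomm x (br z w))) 
      + (1/2 : ℂ) • (hpl1 y (br z w) x) + (1/2 : ℂ) • (hcomm y (mul (br z w) x)) - (1/2 : ℂ) • (hpl2 x y (br z w)) 
      + (1/2 : ℂ) • (hcomm x (br y (br z w))) - (1/2 : ℂ) • (hanti y (mul x (br z w))) + (hEmulL x y w z) 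
      + (hpl2 z (mul x y) w) - (hcomm z (br (mul x y) w)) - (cmulL z (hcomm x (br y w))) 
      - (hDmulL y w x z) - (hcomm z (mul w (mul y x))) + (hcomm w (mul z (mul y x))) 
      - (hpl1 z w (mul y x)) - (cmulL z (hcomm y (mul w x))) - (1/2 : ℂ) • (hpl1 y z (mul x w)) 
      + (1/2 : ℂ) • (hcomm (mul w x) (br y z)) + (1/2 : ℂ) • (cmulL (br y z) (hcomm x w)) - (1/2 : ℂ) • (hcomm (mul x w) (br y z)) 
      + (1/2 : ℂ) • (hpl1 y w (mul x z)) + (1/2 : ℂ) • (hcomm (mul x z) (br y w)) - (1/2 : ℂ) • (cmulL (br y w) (hcomm x z)) 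
      - (1/2 : ℂ) • (hcomm (mul z x) (br y w)) + (1/2 : ℂ) • (hEmulL x w y z) - (1/2 : ℂ) • (cmulL z (hcomm x (br w y))) 
      - (1/2 : ℂ) • (hpl1 w y (mul z x)) + (1/2 : ℂ) • (hpl1 z (br w y) x) + (1/2 : ℂ) • (hcomm z (mul (br w y) x)) 
      - (1/2 : ℂ) • (hpl2 x z (br w y)) + (1/2 : ℂ) • (hcomm x (br z (br w y))) - (1/2 : ℂ) • (hanti z (mul x (br w y))) 
      - (1/2 : ℂ) • (hpl1 y w (mul z x)) + (1/2 : ℂ) • (hDmulL x y z w) - (cmulL w (hcomm y (mul x z))) 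
      + (1/2 : ℂ) • (cmulL w (hcomm z (br x y))) + (1/2 : ℂ) • (cmulL w (hcomm x (mul y z))) + (1/2 : ℂ) • (cmulL y (hcomm w (mul x z))) 
      + (1/2 : ℂ) • (hcomm y (mul w (mul x z))) - (1/2 : ℂ) • (hcomm w (mul y (mul x z))) - (1/2 : ℂ) • (hpl1 y (mul x z) w) 
      - (1/2 : ℂ) • (hcomm y (mul (mul x z) w)) - (1/2 : ℂ) • (cmulL y (hcomm z (mul x w))) - (1/2 : ℂ) • (hcomm y (mul z (mul x w))) 
      + (1/2 : ℂ) • (hcomm z (mul y (mul x w))) + (1/2 : ℂ) • (hpl1 y (mul x w) z) + (1/2 : ℂ) • (hcomm y (mul (mul x w) z)) 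
      - (1/2 : ℂ) • (hanti (mul x z) (br w y)) + (hpl2 z w (mul x y)) - (hcomm z (br w (mul x y))) 
      + (hanti w (mul z (mul x y))) + (hanti (mul x y) (mul z w)) + (cmulL z (cmulL y (hcomm x w))) 
      - (1/2 : ℂ) • (hanti (mul x y) (br z w)) + (1/2 : ℂ) • (hEbrL x z w y) + (1/2 : ℂ) • (hEbrL x w y z) 
      + (1/2 : ℂ) • (hjac z w (mul x y)) + (1/2 : ℂ) • (hjac y z (mul x w)) + (1/2 : ℂ) • (hEbrL x y z w) 
      + (1/2 : ℂ) • (hpl1 w (br y z) x) + (1/2 : ℂ) • (hcomm w (mul (br y z) x)) - (1/2 : ℂ) • (hpl2 x w (br y z)) 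
      + (1/2 : ℂ) • (hcomm x (br w (br y z))) - (1/2 : ℂ) • (hanti w (mul x (br y z))) - (1/2 : ℂ) • (hanti (mul x w) (br y z)) 
      + (1/2 : ℂ) • (hjac y (mul x z) w) + (1/2 : ℂ) • (hpl2 z (mul x w) y) - (1/2 : ℂ) • (hcomm z (br (mul x w) y)) 
      + (1/2 : ℂ) • (hpl2 z y (mul x w)) + (1/2 : ℂ) • (hanti y (mul z (mul x w))) - (1/2 : ℂ) • (hcomm z (br y (mul x w))) 
      + (1/2 : ℂ) • (hanti (mul x w) (mul z y)) - (1/2 : ℂ) • (cmulL w (hcomm z (mul x y))) + (1/2 : ℂ) • (hcomm z (mul w (mul x y))) 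
      - (1/2 : ℂ) • (hcomm w (mul z (mul x y))) - (1/2 : ℂ) • (hDmulL x y w z) - (1/2 : ℂ) • (cmulL z (hcomm w (br x y))) 
      - (1/2 : ℂ) • (cmulL z (hcomm x (mul y w))) - (1/2 : ℂ) • (hpl1 w (mul x y) z) - (1/2 : ℂ) • (hcomm w (mul (mul x y) z)) 
      - (1/2 : ℂ) • (cmulL (br z w) (hcomm x y)) + (1/2 : ℂ) • (hcomm (mul x y) (br z w)) - (1/2 : ℂ) • (hcomm (mul y x) (br z w)) 
      + (1/2 : ℂ) • (hpl1 z w (mul x y))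
end

section
/- Let P be a commutative post-Lie algebra over ℂ. Then for all x, y, z, w ∈ P: (x·y)·{z,w} = 0; that is, every product of two elements annihilates every bracket of two elements under the commutative multiplication. -/
set_option maxHeartbeats 4000000 in
/-- In a commutative post-Lie algebra over ℂ, `(x·y)·{z,w} = 0`. -/
theorem cpa_prod_mul_bracket_eq_zero {P : Type*} [AddCommGroup P] [Module ℂ P]
    (mul br : P →ₗ[ℂ] P →ₗ[ℂ] P)
    (hcomm : ∀ x y : P, mul x y = mul y x)
    (halt : ∀ x : P, br x x = 0)
    (hjac : ∀ x y z : P, br (br x y) z + br (br y z) x + br (br z x) y = 0)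
    (hpl1 : ∀ x y z : P, mul (br x y) z = mul x (mul y z) - mul y (mul x z))
    (hpl2 : ∀ x y z : P, mul x (br y z) = br (mul x y) z + br y (mul x z)) :
    ∀ x y z w : P, mul (mul x y) (br z w) = 0 := by
  have hanti : ∀ a b : P, br a b = - br b a := by
    intro a b
    have h := halt (a + b)
    simp only [map_add, LinearMap.add_apply, halt, zero_add, add_zero] at h
    exact eq_neg_of_add_eq_zero_right h
  intro x y z w
  have h0 := congrArg (fun t => (br w (mul z t))) (hcomm y x)
  have h1 := congrArg (fun t => (br (br t w) z)) (hcomm y x)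
  have h2 := congrArg (fun t => (br (br t z) w)) (hcomm y x)
  have h3 := congrArg (fun t => (br (mul w t) z)) (hcomm y x)
  have h4 := congrArg (fun t => (mul w (mul z t))) (hcomm y x)
  have h5 := congrArg (fun t => (mul z (mul w t))) (hcomm y x)
  have h6 := congrArg (fun t => (mul (br w z) t)) (hcomm y x)
  have h7 := congrArg (fun t => (br w (mul z t))) (hanti y x)
  have h8 := congrArg (fun t => (br w (mul t z))) (hanti y x)
  have h9 := congrArg (fun t => (br (mul w t) z)) (hanti y x)
  have h10 := congrArg (fun t => (br (mul z t) w)) (hanti y x)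
  have h11 := congrArg (fun t => (br (mul t w) z)) (hanti y x)
  have h12 := congrArg (fun t => (br (mul t z) w)) (hanti y x)
  have h13 := congrArg (fun t => (mul w (mul z t))) (hanti y x)
  have h14 := congrArg (fun t => (mul z (mul w t))) (hanti y x)
  have h15 := congrArg (fun t => (mul (br t w) z)) (hanti y x)
  have h16 := congrArg (fun t => (mul (br t z) w)) (hanti y x)
  have h17 := congrArg (fun t => (br w (br y t))) (hcomm z x)
  have h18 := congrArg (fun t => (br w (mul y t))) (hcomm z x)
  have h19 := congrArg (fun t => (br y (br t w))) (hcomm z x)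
  have h20 := congrArg (fun t => (br y (mul w t))) (hcomm z x)
  have h21 := congrArg (fun t => (br (br y t) w)) (hcomm z x)
  have h22 := congrArg (fun t => (mul w (br y t))) (hcomm z x)
  have h23 := congrArg (fun t => (mul w (mul y t))) (hcomm z x)
  have h24 := congrArg (fun t => (mul y (br t w))) (hcomm z x)
  have h25 := congrArg (fun t => (mul y (mul w t))) (hcomm z x)
  have h26 := congrArg (fun t => (mul (br w y) t)) (hcomm z x)
  have h27 := congrArg (fun t => (br y (mul w t))) (hanti z x)
  have h28 := congrArg (fun t => (mul y (mul w t))) (hanti z x)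
  have h29 := congrArg (fun t => (br y (br z t))) (hcomm x w)
  have h30 := congrArg (fun t => (br (br y t) z)) (hcomm x w)
  have h31 := congrArg (fun t => (br (mul y t) z)) (hcomm x w)
  have h32 := congrArg (fun t => (mul y (br z t))) (hcomm x w)
  have h33 := congrArg (fun t => (mul z (br y t))) (hcomm x w)
  have h34 := congrArg (fun t => (mul (br y z) t)) (hcomm x w)
  have h35 := congrArg (fun t => (mul (mul y z) t)) (hcomm x w)
  have h36 := congrArg (fun t => (br y (mul z t))) (hanti x w)
  have h37 := congrArg (fun t => (br (mul y t) z)) (hanti x w)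
  have h38 := congrArg (fun t => (mul y (mul z t))) (hanti x w)
  have h39 := congrArg (fun t => (mul (br y z) t)) (hanti x w)
  have h40 := congrArg (fun t => (mul (br t y) z)) (hanti x w)
  have h41 := congrArg (fun t => (mul (mul y z) t)) (hanti x w)
  have h42 := congrArg (fun t => (br w (br t x))) (hcomm y z)
  have h43 := congrArg (fun t => (br (br t x) w)) (hcomm y z)
  have h44 := congrArg (fun t => (mul w (br t x))) (hcomm y z)
  have h45 := congrArg (fun t => (mul (br t x) w)) (hanti y z)
  have h46 := congrArg (fun t => (br x (mul z t))) (hcomm y w)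
  have h47 := congrArg (fun t => (br (br x t) z)) (hcomm y w)
  have h48 := congrArg (fun t => (br (mul x t) z)) (hcomm y w)
  have h49 := congrArg (fun t => (mul x (mul z t))) (hcomm y w)
  have h50 := congrArg (fun t => (mul (br x z) t)) (hcomm y w)
  have h51 := congrArg (fun t => (mul (mul x z) t)) (hcomm y w)
  have h52 := congrArg (fun t => (br x (mul t z))) (hanti y w)
  have h53 := congrArg (fun t => (br (mul x t) z)) (hanti y w)
  have h54 := congrArg (fun t => (br (mul t x) z)) (hanti y w)
  have h55 := congrArg (fun t => (mul x (mul t z))) (hanti y w)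
  have h56 := congrArg (fun t => (mul z (mul x t))) (hanti y w)
  have h57 := congrArg (fun t => (mul z (mul t x))) (hanti y w)
  have h58 := congrArg (fun t => (mul t (mul x z))) (hanti y w)
  have h59 := congrArg (fun t => (mul (br x z) t)) (hanti y w)
  have h60 := congrArg (fun t => (mul (mul x z) t)) (hanti y w)
  have h61 := congrArg (fun t => (br x (mul y t))) (hcomm z w)
  have h62 := congrArg (fun t => (br y (br x t))) (hcomm z w)
  have h63 := congrArg (fun t => (mul x (mul y t))) (hcomm z w)
  have h64 := congrArg (fun t => (mul y (br x t))) (hcomm z w)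
  have h65 := congrArg (fun t => (mul (br x y) t)) (hcomm z w)
  have h66 := congrArg (fun t => (mul (mul x y) t)) (hcomm z w)
  have h67 := congrArg (fun t => (br y (mul x t))) (hanti z w)
  have h68 := congrArg (fun t => (br y (mul t x))) (hanti z w)
  have h69 := congrArg (fun t => (mul y (mul x t))) (hanti z w)
  have h70 := congrArg (fun t => (mul y (mul t x))) (hanti z w)
  have h71 := congrArg (fun t => (mul (br t y) x)) (hanti z w)
  have h72 := congrArg (fun t => (mul (mul x y) t)) (hanti z w)
  have h73 := congrArg (fun t => (br w t)) (hcomm (br x y) z)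
  have h74 := congrArg (fun t => (br t w)) (hcomm (br x y) z)
  have h75 := congrArg (fun t => (mul w t)) (hcomm (br x y) z)
  have h76 := congrArg (fun t => (br w t)) (hcomm (mul x y) z)
  have h77 := congrArg (fun t => (mul w t)) (hcomm (mul x y) z)
  have h78 := congrArg (fun t => (br w t)) (hanti (mul x y) z)
  have h79 := congrArg (fun t => (br t w)) (hanti (mul x y) z)
  have h80 := congrArg (fun t => (mul w t)) (hanti (mul x y) z)
  have h81 := congrArg (fun t => (mul t w)) (hanti (mul x y) z)
  have h82 := congrArg (fun t => (br w t)) (hcomm (br y z) x)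
  have h83 := congrArg (fun t => (br t w)) (hcomm (br y z) x)
  have h84 := congrArg (fun t => (mul w t)) (hcomm (br y z) x)
  have h85 := congrArg (fun t => (br t w)) (hcomm (mul y z) x)
  have h86 := congrArg (fun t => (br w t)) (hanti (mul y z) x)
  have h87 := congrArg (fun t => (br t w)) (hanti (mul y z) x)
  have h88 := congrArg (fun t => (mul w t)) (hanti (mul y z) x)
  have h89 := congrArg (fun t => (mul t w)) (hanti (mul y z) x)
  have h90 := congrArg (fun t => (br t w)) (hcomm y (br x z))
  have h91 := congrArg (fun t => (mul t w)) (hanti y (br x z))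
  have h92 := congrArg (fun t => (br t w)) (hcomm y (mul x z))
  have h93 := congrArg (fun t => (mul t w)) (hjac y x z)
  have h94 := congrArg (fun t => (br w t)) (hpl1 y x z)
  have h95 := congrArg (fun t => (br t w)) (hpl1 y x z)
  have h96 := congrArg (fun t => (br t w)) (hpl2 y x z)
  have h97 := congrArg (fun t => (br w t)) (hpl1 y z x)
  have h98 := congrArg (fun t => (mul w t)) (hpl1 y z x)
  have h99 := congrArg (fun t => (br w t)) (hpl2 x y z)
  have h100 := congrArg (fun t => (br t w)) (hpl2 x y z)
  have h101 := congrArg (fun t => (mul w t)) (hpl2 x y z)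
  have h102 := congrArg (fun t => (br w t)) (hpl2 z y x)
  have h103 := congrArg (fun t => (br t w)) (hpl2 z y x)
  have h104 := congrArg (fun t => (mul w t)) (hpl2 z y x)
  have h105 := congrArg (fun t => (br t z)) (hcomm (br x y) w)
  have h106 := congrArg (fun t => (mul z t)) (hcomm (br x y) w)
  have h107 := congrArg (fun t => (br t z)) (hcomm (mul x y) w)
  have h108 := congrArg (fun t => (mul z t)) (hcomm (mul x y) w)
  have h109 := congrArg (fun t => (mul z t)) (hanti (mul x y) w)
  have h110 := congrArg (fun t => (mul t z)) (hanti (mul x y) w)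
  have h111 := congrArg (fun t => (br t z)) (hcomm (br w y) x)
  have h112 := congrArg (fun t => (mul z t)) (hcomm (br w y) x)
  have h113 := congrArg (fun t => (br t z)) (hcomm (mul w y) x)
  have h114 := congrArg (fun t => (br t z)) (hanti (mul w y) x)
  have h115 := congrArg (fun t => (mul z t)) (hanti (mul w y) x)
  have h116 := congrArg (fun t => (mul t z)) (hanti (mul w y) x)
  have h117 := congrArg (fun t => (br t z)) (hcomm y (br w x))
  have h118 := congrArg (fun t => (mul t z)) (hanti y (br w x))
  have h119 := congrArg (fun t => (br t z)) (hcomm y (mul w x))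
  have h120 := congrArg (fun t => (mul t z)) (hjac y x w)
  have h121 := congrArg (fun t => (br t z)) (hpl1 y x w)
  have h122 := congrArg (fun t => (br t z)) (hpl2 y x w)
  have h123 := congrArg (fun t => (br t z)) (hpl1 y w x)
  have h124 := congrArg (fun t => (mul z t)) (hpl1 y w x)
  have h125 := congrArg (fun t => (br t z)) (hpl2 x y w)
  have h126 := congrArg (fun t => (mul z t)) (hpl2 x y w)
  have h127 := congrArg (fun t => (br t z)) (hpl2 w y x)
  have h128 := congrArg (fun t => (mul z t)) (hpl2 w y x)
  have h129 := congrArg (fun t => (br y t)) (hcomm (br x z) w)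
  have h130 := congrArg (fun t => (mul y t)) (hcomm (br x z) w)
  have h131 := congrArg (fun t => (br y t)) (hcomm (mul x z) w)
  have h132 := congrArg (fun t => (mul y t)) (hcomm (mul x z) w)
  have h133 := congrArg (fun t => (br y t)) (hcomm (br w z) x)
  have h134 := congrArg (fun t => (mul y t)) (hcomm (br w z) x)
  have h135 := congrArg (fun t => (br y t)) (hanti (mul w z) x)
  have h136 := congrArg (fun t => (mul y t)) (hanti (mul w z) x)
  have h137 := congrArg (fun t => (br y t)) (hcomm z (br w x))
  have h138 := congrArg (fun t => (mul y t)) (hcomm z (br w x))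
  have h139 := congrArg (fun t => (br y t)) (hcomm z (mul w x))
  have h140 := congrArg (fun t => (mul y t)) (hcomm z (mul w x))
  have h141 := congrArg (fun t => (br y t)) (hpl2 z x w)
  have h142 := congrArg (fun t => (mul y t)) (hpl2 z x w)
  have h143 := congrArg (fun t => (br y t)) (hpl1 z w x)
  have h144 := congrArg (fun t => (mul y t)) (hpl1 z w x)
  have h145 := congrArg (fun t => (br y t)) (hpl2 x z w)
  have h146 := congrArg (fun t => (mul y t)) (hpl2 x z w)
  have h147 := congrArg (fun t => (br y t)) (hpl2 w z x)
  have h148 := congrArg (fun t => (mul y t)) (hpl2 w z x)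
  have h149 := congrArg (fun t => (br x t)) (hcomm (mul y z) w)
  have h150 := congrArg (fun t => (mul x t)) (hcomm (mul y z) w)
  have h151 := congrArg (fun t => (br x t)) (hcomm (mul w y) z)
  have h152 := congrArg (fun t => (mul x t)) (hcomm (mul w y) z)
  have h153 := congrArg (fun t => (mul t x)) (hanti y (br w z))
  have h154 := congrArg (fun t => (mul t x)) (hjac y z w)
  have h155 := congrArg (fun t => (br x t)) (hpl1 y z w)
  have h156 := congrArg (fun t => (mul x t)) (hpl1 y z w)
  have h157 := congrArg (fun t => (br x t)) (hpl1 y w z)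
  have h158 := congrArg (fun t => (mul x t)) (hpl1 y w z)
  have h159 := (hcomm (br w (mul x y)) z)
  have h160 := (hcomm (br x (mul w y)) z)
  have h161 := (hcomm (br y (mul w x)) z)
  have h162 := (hcomm (br x (mul y z)) w)
  have h163 := (hanti (br x (mul y z)) w)
  have h164 := (hcomm (br y (mul x z)) w)
  have h165 := (hcomm (br z (mul x y)) w)
  have h166 := (hanti (br z (mul x y)) w)
  have h167 := (hanti (mul x (mul y z)) w)
  have h168 := (hcomm (mul x y) (br w z))
  have h169 := (hcomm (br w y) (br x z))
  have h170 := (hcomm (br w y) (mul x z))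
  have h171 := (hcomm (mul w y) (br x z))
  have h172 := (hcomm (mul w y) (mul x z))
  have h173 := (hcomm (br y z) (br w x))
  have h174 := (hcomm (br y z) (mul w x))
  have h175 := (hcomm (mul y z) (br w x))
  have h176 := (hcomm (mul y z) (mul w x))
  have h177 := (hpl1 (br x y) w z)
  have h178 := (hpl1 (mul x y) w z)
  have h179 := (hpl2 (mul x y) w z)
  have h180 := (hpl1 (br x y) z w)
  have h181 := (hpl1 (mul x y) z w)
  have h182 := (hpl1 (br w y) x z)
  have h183 := (hpl2 (br w y) x z)
  have h184 := (hpl1 (mul w y) x z)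
  have h185 := (hpl2 (mul w y) x z)
  have h186 := (hpl1 y (br w x) z)
  have h187 := (hpl1 y (mul w x) z)
  have h188 := (hpl1 (br y z) x w)
  have h189 := (hpl2 (br y z) x w)
  have h190 := (hpl1 (mul y z) x w)
  have h191 := (hpl2 (mul y z) x w)
  have h192 := (hpl1 y (br x z) w)
  have h193 := (hpl1 y (mul x z) w)
  have h194 := (hpl1 (br w y) z x)
  have h195 := (hpl1 (br y z) w x)
  have h196 := (hpl1 y (br w z) x)
  have h197 := (hpl1 y w (mul x z))
  have h198 := (hpl1 y z (mul w x))
  have h199 := (hpl2 (br w x) y z)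
  have h200 := (hpl2 (mul w x) y z)
  have h201 := (hpl2 (br x z) y w)
  have h202 := (hpl2 (mul x z) y w)
  simp only [map_add, map_sub, map_neg, map_zero, LinearMap.add_apply,
    LinearMap.sub_apply, LinearMap.neg_apply, LinearMap.zero_apply] at h0 h1 h2 h3 h4 h5 h6 h7 h8 h9 h10 h11 h12 h13 h14 h15 h16 h17 h18 h19 h20 h21 h22 h23 h24 h25 h26 h27 h28 h29 h30 h31 h32 h33 h34 h35 h36 h37 h38 h39 h40 h41 h42 h43 h44 h45 h46 h47 h48 h49 h50 h51 h52 h53 h54 h55 h56 h57 h58 h59 h60 h61 h62 h63 h64 h65 h66 h67 h68 h69 h70 h71 h72 h73 h74 h75 h76 h77 h78 h79 h80 h81 h82 h83 h84 h85 h86 h87 h88 h89 h90 h91 h92 h93 h94 h95 h96 h97 h98 h99 h100 h101 h102 h103 h104 h105 h106 h107 h108 h109 h110 h111 h112 h113 h114 h115 h116 h117 h118 h119 h120 h121 h122 h123 h124 h125 h126 h127 h128 h129 h130 h131 h132 h133 h134 h135 h136 h137 h138 h139 h140 h141 h142 h143 h144 h145 h146 h147 h148 h149 h150 h151 h152 h153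 h154 h155 h156 h157 h158 h159 h160 h161 h162 h163 h164 h165 h166 h167 h168 h169 h170 h171 h172 h173 h174 h175 h176 h177 h178 h179 h180 h181 h182 h183 h184 h185 h186 h187 h188 h189 h190 h191 h192 h193 h194 h195 h196 h197 h198 h199 h200 h201 h202
  have h2 : mul (mul x y) (br z w) + mul (mul x y) (br z w) = 0 := by
    linear_combination (norm := abel1) (-2 : ℤ) • h0 +
      (1 : ℤ) • h1 +
      (-1 : ℤ) • h2 +
      (-2 : ℤ) • h3 +
      (-2 : ℤ) • h4 +
      (2 : ℤ) • h5 +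
      (4 : ℤ) • h6 +
      (-2 : ℤ) • h7 +
      (2 : ℤ) • h8 +
      (-1 : ℤ) • h9 +
      (-1 : ℤ) • h10 +
      (1 : ℤ) • h11 +
      (1 : ℤ) • h12 +
      (1 : ℤ) • h13 +
      (-1 : ℤ) • h14 +
      (1 : ℤ) • h15 +
      (-1 : ℤ) • h16 +
      (2 : ℤ) • h17 +
      (2 : ℤ) • h18 +
      (1 : ℤ) • h19 +
      (-1 : ℤ) • h20 +
      (1 : ℤ) • h21 +
      (-1 : ℤ) • h22 +
      (2 : ℤ) • h23 +
      (-1 : ℤ) • h24 +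
      (-3 : ℤ) • h25 +
      (-4 : ℤ) • h26 +
      (-1 : ℤ) • h27 +
      (1 : ℤ) • h28 +
      (-1 : ℤ) • h29 +
      (-1 : ℤ) • h30 +
      (-1 : ℤ) • h31 +
      (1 : ℤ) • h32 +
      (-2 : ℤ) • h33 +
      (1 : ℤ) • h34 +
      (-1 : ℤ) • h35 +
      (-1 : ℤ) • h36 +
      (-1 : ℤ) • h37 +
      (1 : ℤ) • h38 +
      (1 : ℤ) • h39 +
      (1 : ℤ) • h40 +
      (-1 : ℤ) • h41 +
      (-2 : ℤ) • h42 +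
      (-1 : ℤ) • h43 +
      (1 : ℤ) • h44 +
      (-1 : ℤ) • h45 +
      (1 : ℤ) • h46 +
      (1 : ℤ) • h47 +
      (1 : ℤ) • h48 +
      (1 : ℤ) • h49 +
      (-1 : ℤ) • h50 +
      (-1 : ℤ) • h51 +
      (-1 : ℤ) • h52 +
      (1 : ℤ) • h53 +
      (-2 : ℤ) • h54 +
      (-1 : ℤ) • h55 +
      (2 : ℤ) • h56 +
      (2 : ℤ) • h57 +
      (-2 : ℤ) • h58 +
      (1 : ℤ) • h59 +
      (-1 : ℤ) • h60 +
      (-1 : ℤ) • h61 +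
      (1 : ℤ) • h62 +
      (-1 : ℤ) • h63 +
      (-1 : ℤ) • h64 +
      (1 : ℤ) • h65 +
      (2 : ℤ) • h66 +
      (1 : ℤ) • h67 +
      (-1 : ℤ) • h68 +
      (-1 : ℤ) • h69 +
      (-3 : ℤ) • h70 +
      (-4 : ℤ) • h71 +
      (2 : ℤ) • h72 +
      (-2 : ℤ) • h73 +
      (-1 : ℤ) • h74 +
      (1 : ℤ) • h75 +
      (2 : ℤ) • h76 +
      (2 : ℤ) • h77 +
      (-2 : ℤ) • h78 +
      (-2 : ℤ) • h79 +
      (2 : ℤ) • h80 +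
      (-2 : ℤ) • h81 +
      (-2 : ℤ) • h82 +
      (-1 : ℤ) • h83 +
      (2 : ℤ) • h84 +
      (1 : ℤ) • h85 +
      (2 : ℤ) • h86 +
      (1 : ℤ) • h87 +
      (-1 : ℤ) • h88 +
      (1 : ℤ) • h89 +
      (1 : ℤ) • h90 +
      (-1 : ℤ) • h91 +
      (-1 : ℤ) • h92 +
      (1 : ℤ) • h93 +
      (-2 : ℤ) • h94 +
      (-1 : ℤ) • h95 +
      (-1 : ℤ) • h96 +
      (2 : ℤ) • h97 +
      (2 : ℤ) • h98 +
      (-2 : ℤ) • h99 +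
      (-1 : ℤ) • h100 +
      (2 : ℤ) • h101 +
      (2 : ℤ) • h102 +
      (1 : ℤ) • h103 +
      (-1 : ℤ) • h104 +
      (-1 : ℤ) • h105 +
      (-1 : ℤ) • h106 +
      (2 : ℤ) • h107 +
      (-2 : ℤ) • h108 +
      (-2 : ℤ) • h109 +
      (2 : ℤ) • h110 +
      (1 : ℤ) • h111 +
      (2 : ℤ) • h112 +
      (-1 : ℤ) • h113 +
      (1 : ℤ) • h114 +
      (1 : ℤ) • h115 +
      (-1 : ℤ) • h116 +
      (1 : ℤ) • h117 +
      (-1 : ℤ) • h118 +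
      (1 : ℤ) • h119 +
      (-1 : ℤ) • h120 +
      (-1 : ℤ) • h121 +
      (1 : ℤ) • h122 +
      (2 : ℤ) • h123 +
      (-2 : ℤ) • h124 +
      (-1 : ℤ) • h125 +
      (-2 : ℤ) • h126 +
      (1 : ℤ) • h127 +
      (1 : ℤ) • h128 +
      (-1 : ℤ) • h129 +
      (1 : ℤ) • h130 +
      (1 : ℤ) • h131 +
      (1 : ℤ) • h132 +
      (1 : ℤ) • h133 +
      (-1 : ℤ) • h134 +
      (1 : ℤ) • h135 +
      (-1 : ℤ) • h136 +
      (1 : ℤ) • h137 +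
      (-1 : ℤ) • h138 +
      (1 : ℤ) • h139 +
      (1 : ℤ) • h140 +
      (1 : ℤ) • h141 +
      (-1 : ℤ) • h142 +
      (1 : ℤ) • h143 +
      (3 : ℤ) • h144 +
      (-1 : ℤ) • h145 +
      (1 : ℤ) • h146 +
      (1 : ℤ) • h147 +
      (-1 : ℤ) • h148 +
      (1 : ℤ) • h149 +
      (1 : ℤ) • h150 +
      (-1 : ℤ) • h151 +
      (-1 : ℤ) • h152 +
      (4 : ℤ) • h153 +
      (4 : ℤ) • h154 +
      (-1 : ℤ) • h155 +
      (-1 : ℤ) • h156 +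
      (1 : ℤ) • h157 +
      (1 : ℤ) • h158 +
      (-2 : ℤ) • h159 +
      (1 : ℤ) • h160 +
      (1 : ℤ) • h161 +
      (-1 : ℤ) • h162 +
      (-2 : ℤ) • h163 +
      (-1 : ℤ) • h164 +
      (2 : ℤ) • h165 +
      (2 : ℤ) • h166 +
      (2 : ℤ) • h167 +
      (-4 : ℤ) • h168 +
      (1 : ℤ) • h169 +
      (-1 : ℤ) • h170 +
      (1 : ℤ) • h171 +
      (1 : ℤ) • h172 +
      (-1 : ℤ) • h173 +
      (-1 : ℤ) • h174 +
      (1 : ℤ) • h175 +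
      (-1 : ℤ) • h176 +
      (-1 : ℤ) • h177 +
      (-2 : ℤ) • h178 +
      (2 : ℤ) • h179 +
      (1 : ℤ) • h180 +
      (2 : ℤ) • h181 +
      (1 : ℤ) • h182 +
      (-1 : ℤ) • h183 +
      (1 : ℤ) • h184 +
      (-1 : ℤ) • h185 +
      (1 : ℤ) • h186 +
      (-1 : ℤ) • h187 +
      (1 : ℤ) • h188 +
      (-1 : ℤ) • h189 +
      (-1 : ℤ) • h190 +
      (1 : ℤ) • h191 +
      (1 : ℤ) • h192 +
      (1 : ℤ) • h193 +
      (-4 : ℤ) • h194 +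
      (-4 : ℤ) • h195 +
      (-4 : ℤ) • h196 +
      (2 : ℤ) • h197 +
      (-2 : ℤ) • h198 +
      (-1 : ℤ) • h199 +
      (-1 : ℤ) • h200 +
      (-1 : ℤ) • h201 +
      (1 : ℤ) • h202
  have h3 : (2 : ℂ) • mul (mul x y) (br z w) = 0 := by rw [two_smul]; exact h2
  exact (smul_eq_zero.mp h3).resolve_left (by norm_num)
end

section
/- Let P be a commutative post-Lie algebra over ℂ and let 𝔭 ⊆ P be a ℂ-subspace that is perfect for the Lie bracket, i.e., 𝔭 equals the ℂ-linear span of the set {{a,b} : a, b ∈ 𝔭}. Then 𝔭 · P = 0, i.e., p·x = 0 for every p ∈ 𝔭 and every x ∈ P. -/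
private lemma cpa_key {P : Type*} [AddCommGroup P] [Module ℂ P]
    (mul br : P →ₗ[ℂ] P →ₗ[ℂ] P)
    (hcomm : ∀ x y : P, mul x y = mul y x)
    (hpl1 : ∀ x y z : P, mul (br x y) z = mul x (mul y z) - mul y (mul x z))
    (hpl2 : ∀ x y z : P, mul x (br y z) = br (mul x y) z + br y (mul x z))
    (a b c z : P) : mul (br a b) (mul c z) = 0 := by
  have e0 : (mul c (br (mul a b) z)) = (mul c (br (mul b a) z)) := by rw [hcomm a b]
  have h0 : (mul c (br (mul a b) z)) - (mul c (br (mul b a) z)) = 0 := sub_eq_zero_of_eq e0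
  have e1 : (mul z (br (mul a b) c)) = (mul z (br (mul b a) c)) := by rw [hcomm a b]
  have h1 : (mul z (br (mul a b) c)) - (mul z (br (mul b a) c)) = 0 := sub_eq_zero_of_eq e1
  have e2 : (mul a (mul b (mul c z))) = (mul a (mul b (mul z c))) := by rw [hcomm c z]
  have h2 : (mul a (mul b (mul c z))) - (mul a (mul b (mul z c))) = 0 := sub_eq_zero_of_eq e2
  have e3 : (mul b (mul a (mul c z))) = (mul b (mul a (mul z c))) := by rw [hcomm c z]
  have h3 : (mul b (mul a (mul c z))) - (mul b (mul a (mul z c))) = 0 := sub_eq_zero_of_eq e3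
  have e4 : (mul b (mul c (mul a z))) = (mul b (mul (mul a z) c)) := by rw [hcomm c (mul a z)]
  have h4 : (mul b (mul c (mul a z))) - (mul b (mul (mul a z) c)) = 0 := sub_eq_zero_of_eq e4
  have e5 : (mul b (mul c (br a z))) = (mul b (mul (br a z) c)) := by rw [hcomm c (br a z)]
  have h5 : (mul b (mul c (br a z))) - (mul b (mul (br a z) c)) = 0 := sub_eq_zero_of_eq e5
  have e6 : (mul a (mul c (mul b z))) = (mul a (mul (mul b z) c)) := by rw [hcomm c (mul b z)]
  have h6 : (mul a (mul c (mul b z))) - (mul a (mul (mul b z) c)) = 0 := sub_eq_zero_of_eq e6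
  have e7 : (mul a (mul c (br b z))) = (mul a (mul (br b z) c)) := by rw [hcomm c (br b z)]
  have h7 : (mul a (mul c (br b z))) - (mul a (mul (br b z) c)) = 0 := sub_eq_zero_of_eq e7
  have e8 : (mul c (br a (mul b z))) = (mul (br a (mul b z)) c) := by rw [hcomm c (br a (mul b z))]
  have h8 : (mul c (br a (mul b z))) - (mul (br a (mul b z)) c) = 0 := sub_eq_zero_of_eq e8
  have e9 : (mul c (br b (mul a z))) = (mul (br b (mul a z)) c) := by rw [hcomm c (br b (mul a z))]
  have h9 : (mul c (br b (mul a z))) - (mul (br b (mul a z)) c) = 0 := sub_eq_zero_of_eq e9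
  have e10 : (mul b (mul z (mul a c))) = (mul b (mul (mul a c) z)) := by rw [hcomm z (mul a c)]
  have h10 : (mul b (mul z (mul a c))) - (mul b (mul (mul a c) z)) = 0 := sub_eq_zero_of_eq e10
  have e11 : (mul b (mul z (br a c))) = (mul b (mul (br a c) z)) := by rw [hcomm z (br a c)]
  have h11 : (mul b (mul z (br a c))) - (mul b (mul (br a c) z)) = 0 := sub_eq_zero_of_eq e11
  have e12 : (mul a (mul z (mul b c))) = (mul a (mul (mul b c) z)) := by rw [hcomm z (mul b c)]
  have h12 : (mul a (mul z (mul b c))) - (mul a (mul (mul b c) z)) = 0 := sub_eq_zero_of_eq e12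
  have e13 : (mul a (mul z (br b c))) = (mul a (mul (br b c) z)) := by rw [hcomm z (br b c)]
  have h13 : (mul a (mul z (br b c))) - (mul a (mul (br b c) z)) = 0 := sub_eq_zero_of_eq e13
  have e14 : (mul z (br a (mul b c))) = (mul (br a (mul b c)) z) := by rw [hcomm z (br a (mul b c))]
  have h14 : (mul z (br a (mul b c))) - (mul (br a (mul b c)) z) = 0 := sub_eq_zero_of_eq e14
  have e15 : (mul z (br b (mul a c))) = (mul (br b (mul a c)) z) := by rw [hcomm z (br b (mul a c))]
  have h15 : (mul z (br b (mul a c))) - (mul (br b (mul a c)) z) = 0 := sub_eq_zero_of_eq e15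
  have e16 : (mul (mul a c) (mul b z)) = (mul (mul b z) (mul a c)) := by rw [hcomm (mul a c) (mul b z)]
  have h16 : (mul (mul a c) (mul b z)) - (mul (mul b z) (mul a c)) = 0 := sub_eq_zero_of_eq e16
  have e17 : (mul (br a c) (br b z)) = (mul (br b z) (br a c)) := by rw [hcomm (br a c) (br b z)]
  have h17 : (mul (br a c) (br b z)) - (mul (br b z) (br a c)) = 0 := sub_eq_zero_of_eq e17
  have e18 : (mul (mul a z) (mul b c)) = (mul (mul b c) (mul a z)) := by rw [hcomm (mul a z) (mul b c)]
  have h18 : (mul (mul a z) (mul b c)) - (mul (mul b c) (mul a z)) = 0 := sub_eq_zero_of_eq e18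
  have e19 : (mul (br a z) (br b c)) = (mul (br b c) (br a z)) := by rw [hcomm (br a z) (br b c)]
  have h19 : (mul (br a z) (br b c)) - (mul (br b c) (br a z)) = 0 := sub_eq_zero_of_eq e19
  have e20 : (mul z (mul a (br b c))) = ((mul z (br (mul a b) c)) + (mul z (br b (mul a c)))) := by rw [hpl2 a b c, map_add]
  have h20 : (mul z (mul a (br b c))) - ((mul z (br (mul a b) c)) + (mul z (br b (mul a c)))) = 0 := sub_eq_zero_of_eq e20
  have e21 : (mul c (mul a (br b z))) = ((mul c (br (mul a b) z)) + (mul c (br b (mul a z)))) := by rw [hpl2 a b z, map_add]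
  have h21 : (mul c (mul a (br b z))) - ((mul c (br (mul a b) z)) + (mul c (br b (mul a z)))) = 0 := sub_eq_zero_of_eq e21
  have e22 : (mul (br a b) (mul c z)) = ((mul a (mul b (mul c z))) - (mul b (mul a (mul c z)))) := by rw [hpl1 a b (mul c z)]
  have h22 : (mul (br a b) (mul c z)) - ((mul a (mul b (mul c z))) - (mul b (mul a (mul c z)))) = 0 := sub_eq_zero_of_eq e22
  have e23 : (mul b (mul (br a c) z)) = ((mul b (mul a (mul c z))) - (mul b (mul c (mul a z)))) := by rw [hpl1 a c z, map_sub]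
  have h23 : (mul b (mul (br a c) z)) - ((mul b (mul a (mul c z))) - (mul b (mul c (mul a z)))) = 0 := sub_eq_zero_of_eq e23
  have e24 : (mul (br a c) (br b z)) = ((mul a (mul c (br b z))) - (mul c (mul a (br b z)))) := by rw [hpl1 a c (br b z)]
  have h24 : (mul (br a c) (br b z)) - ((mul a (mul c (br b z))) - (mul c (mul a (br b z)))) = 0 := sub_eq_zero_of_eq e24
  have e25 : (mul b (mul (br a z) c)) = ((mul b (mul a (mul z c))) - (mul b (mul z (mul a c)))) := by rw [hpl1 a z c, map_sub]
  have h25 : (mul b (mul (br a z) c)) - ((mul b (mul a (mul z c))) - (mul b (mul z (mul a c)))) = 0 := sub_eq_zero_of_eq e25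
  have e26 : (mul (br a z) (br b c)) = ((mul a (mul z (br b c))) - (mul z (mul a (br b c)))) := by rw [hpl1 a z (br b c)]
  have h26 : (mul (br a z) (br b c)) - ((mul a (mul z (br b c))) - (mul z (mul a (br b c)))) = 0 := sub_eq_zero_of_eq e26
  have e27 : (mul (br a (mul b c)) z) = ((mul a (mul (mul b c) z)) - (mul (mul b c) (mul a z))) := by rw [hpl1 a (mul b c) z]
  have h27 : (mul (br a (mul b c)) z) - ((mul a (mul (mul b c) z)) - (mul (mul b c) (mul a z))) = 0 := sub_eq_zero_of_eq e27
  have e28 : (mul (br a (mul b z)) c) = ((mul a (mul (mul b z) c)) - (mul (mul b z) (mul a c))) := by rw [hpl1 a (mul b z) c]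
  have h28 : (mul (br a (mul b z)) c) - ((mul a (mul (mul b z) c)) - (mul (mul b z) (mul a c))) = 0 := sub_eq_zero_of_eq e28
  have e29 : (mul z (mul b (br a c))) = ((mul z (br (mul b a) c)) + (mul z (br a (mul b c)))) := by rw [hpl2 b a c, map_add]
  have h29 : (mul z (mul b (br a c))) - ((mul z (br (mul b a) c)) + (mul z (br a (mul b c)))) = 0 := sub_eq_zero_of_eq e29
  have e30 : (mul c (mul b (br a z))) = ((mul c (br (mul b a) z)) + (mul c (br a (mul b z)))) := by rw [hpl2 b a z, map_add]
  have h30 : (mul c (mul b (br a z))) - ((mul c (br (mul b a) z)) + (mul c (br a (mul b z)))) = 0 := sub_eq_zero_of_eq e30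
  have e31 : (mul a (mul (br b c) z)) = ((mul a (mul b (mul c z))) - (mul a (mul c (mul b z)))) := by rw [hpl1 b c z, map_sub]
  have h31 : (mul a (mul (br b c) z)) - ((mul a (mul b (mul c z))) - (mul a (mul c (mul b z)))) = 0 := sub_eq_zero_of_eq e31
  have e32 : (mul (br b c) (br a z)) = ((mul b (mul c (br a z))) - (mul c (mul b (br a z)))) := by rw [hpl1 b c (br a z)]
  have h32 : (mul (br b c) (br a z)) - ((mul b (mul c (br a z))) - (mul c (mul b (br a z)))) = 0 := sub_eq_zero_of_eq e32
  have e33 : (mul a (mul (br b z) c)) = ((mul a (mul b (mul z c))) - (mul a (mul z (mul b c)))) := by rw [hpl1 b z c, map_sub]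
  have h33 : (mul a (mul (br b z) c)) - ((mul a (mul b (mul z c))) - (mul a (mul z (mul b c)))) = 0 := sub_eq_zero_of_eq e33
  have e34 : (mul (br b z) (br a c)) = ((mul b (mul z (br a c))) - (mul z (mul b (br a c)))) := by rw [hpl1 b z (br a c)]
  have h34 : (mul (br b z) (br a c)) - ((mul b (mul z (br a c))) - (mul z (mul b (br a c)))) = 0 := sub_eq_zero_of_eq e34
  have e35 : (mul (br b (mul a c)) z) = ((mul b (mul (mul a c) z)) - (mul (mul a c) (mul b z))) := by rw [hpl1 b (mul a c) z]
  have h35 : (mul (br b (mul a c)) z) - ((mul b (mul (mul a c) z)) - (mul (mul a c) (mul b z))) = 0 := sub_eq_zero_of_eq e35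
  have e36 : (mul (br b (mul a z)) c) = ((mul b (mul (mul a z) c)) - (mul (mul a z) (mul b c))) := by rw [hpl1 b (mul a z) c]
  have h36 : (mul (br b (mul a z)) c) - ((mul b (mul (mul a z) c)) - (mul (mul a z) (mul b c))) = 0 := sub_eq_zero_of_eq e36
  have key : mul (br a b) (mul c z) + mul (br a b) (mul c z) = ((mul c (br (mul a b) z)) - (mul c (br (mul b a) z))) + ((mul z (br (mul a b) c)) - (mul z (br (mul b a) c))) + ((mul a (mul b (mul c z))) - (mul a (mul b (mul z c)))) - ((mul b (mul a (mul c z))) - (mul b (mul a (mul z c)))) - ((mul b (mul c (mul a z))) - (mul b (mul (mul a z) c))) + ((mul b (mul c (br a z))) - (mul b (mul (br a z) c))) + ((mul a (mul c (mul b z))) - (mul a (mul (mul b z) c))) - ((mul a (mul c (br b z))) - (mul a (mul (br b z) c))) - ((mul c (br a (mul b z))) - (mul (br a (mul b z)) c)) + ((mul c (br b (mul a z))) - (mul (br b (mul a z)) c)) - ((mul b (mul z (mul a c))) - (mul b (mul (mul a c) z))) + ((mul b (mul z (br a c))) - (mul b (mul (br a c) z))) + ((mul a (mul z (mul b c)))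 - (mul a (mul (mul b c) z))) - ((mul a (mul z (br b c))) - (mul a (mul (br b c) z))) - ((mul z (br a (mul b c))) - (mul (br a (mul b c)) z)) + ((mul z (br b (mul a c))) - (mul (br b (mul a c)) z)) - ((mul (mul a c) (mul b z)) - (mul (mul b z) (mul a c))) + ((mul (br a c) (br b z)) - (mul (br b z) (br a c))) - ((mul (mul a z) (mul b c)) - (mul (mul b c) (mul a z))) + ((mul (br a z) (br b c)) - (mul (br b c) (br a z))) + ((mul z (mul a (br b c))) - ((mul z (br (mul a b) c)) + (mul z (br b (mul a c))))) + ((mul c (mul a (br b z))) - ((mul c (br (mul a b) z)) + (mul c (br b (mul a z))))) + ((mul (br a b) (mul c z)) - ((mul a (mul b (mul c z))) - (mul b (mul a (mul c z))))) + ((mul (br a b) (mul c z)) - ((mul a (mul b (mul c z))) - (mul b (mul a (mul c z))))) + ((mul b (mul (br a c) z)) - ((mul b (mul a (mul c z))) - (mul b (mul c (mul a z))))) - ((mul (br a c) (br b z)) - ((mul a (mul c (br b z))) - (mul c (mul a (br b z))))) + ((mul b (mul (br a z) c)) - ((mul b (mul a (mul z c))) - (mul b (mul z (mul a c))))) - ((mul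 (br a z) (br b c)) - ((mul a (mul z (br b c))) - (mul z (mul a (br b c))))) - ((mul (br a (mul b c)) z) - ((mul a (mul (mul b c) z)) - (mul (mul b c) (mul a z)))) - ((mul (br a (mul b z)) c) - ((mul a (mul (mul b z) c)) - (mul (mul b z) (mul a c)))) - ((mul z (mul b (br a c))) - ((mul z (br (mul b a) c)) + (mul z (br a (mul b c))))) - ((mul c (mul b (br a z))) - ((mul c (br (mul b a) z)) + (mul c (br a (mul b z))))) - ((mul a (mul (br b c) z)) - ((mul a (mul b (mul c z))) - (mul a (mul c (mul b z))))) + ((mul (br b c) (br a z)) - ((mul b (mul c (br a z))) - (mul c (mul b (br a z))))) - ((mul a (mul (br b z) c)) - ((mul a (mul b (mul z c))) - (mul a (mul z (mul b c))))) + ((mul (br b z) (br a c)) - ((mul b (mul z (br a c))) - (mul z (mul b (br a c))))) + ((mul (br b (mul a c)) z) - ((mul b (mul (mul a c) z)) - (mul (mul a c) (mul b z)))) + ((mul (br b (mul a z)) c) - ((mul b (mul (mul a z) c)) - (mul (mul a z) (mul b c)))) := by abel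
  rw [h0, h1, h2, h3, h4, h5, h6, h7, h8, h9, h10, h11, h12, h13, h14, h15, h16, h17, h18, h19, h20, h21, h22, h23, h24, h25, h26, h27, h28, h29, h30, h31, h32, h33, h34, h35, h36] at key
  have key2 : (2 : ℂ) • (mul (br a b) (mul c z)) = 0 := by
    rw [two_smul]
    simpa using key
  have h2 : (2 : ℂ) ≠ 0 := by norm_num
  simpa [h2] using key2

/-- If `𝔭` is a perfect Lie subspace of a commutative post-Lie algebra `P` over ℂ
(i.e. `𝔭` equals the span of brackets of its elements), then `𝔭 · P = 0`. -/
theorem cpa_perfect_subalgebra_mul_eq_zero {P : Type*} [AddCommGroup P] [Module ℂ P]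
    (mul br : P →ₗ[ℂ] P →ₗ[ℂ] P)
    (hcomm : ∀ x y : P, mul x y = mul y x)
    (halt : ∀ x : P, br x x = 0)
    (hjac : ∀ x y z : P, br (br x y) z + br (br y z) x + br (br z x) y = 0)
    (hpl1 : ∀ x y z : P, mul (br x y) z = mul x (mul y z) - mul y (mul x z))
    (hpl2 : ∀ x y z : P, mul x (br y z) = br (mul x y) z + br y (mul x z))
    (𝔭 : Submodule ℂ P)
    (hperf : 𝔭 = Submodule.span ℂ {u : P | ∃ a ∈ 𝔭, ∃ b ∈ 𝔭, u = br a b}) :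
    ∀ p ∈ 𝔭, ∀ x : P, mul p x = 0 := by
  have key4 : ∀ a b c z : P, mul (br a b) (mul c z) = 0 :=
    fun a b c z => cpa_key mul br hcomm hpl1 hpl2 a b c z
  -- Step A: every element of 𝔭 annihilates all products
  have hA : ∀ q ∈ 𝔭, ∀ u v : P, mul q (mul u v) = 0 := by
    intro q hq u v
    have hle : 𝔭 ≤ LinearMap.ker (mul.flip (mul u v)) := by
      conv_lhs => rw [hperf]
      apply Submodule.span_le.mpr
      rintro w ⟨s, hs, t, ht, rfl⟩
      simp only [SetLike.mem_coe, LinearMap.mem_ker, LinearMap.flip_apply]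
      exact key4 s t u v
    have := hle hq
    simpa only [LinearMap.mem_ker, LinearMap.flip_apply] using this
  intro p hp x
  have hle2 : 𝔭 ≤ LinearMap.ker (mul.flip x) := by
    conv_lhs => rw [hperf]
    apply Submodule.span_le.mpr
    rintro w ⟨s, hs, t, ht, rfl⟩
    simp only [SetLike.mem_coe, LinearMap.mem_ker, LinearMap.flip_apply]
    rw [hpl1 s t x, hA s hs t x, hA t ht s x, sub_zero]
  have := hle2 hp
  simpa only [LinearMap.mem_ker, LinearMap.flip_apply] using this
end

section
/- Let A be a finite-dimensional commutative associative (not necessarily unital) algebra over ℂ that is perfect, i.e., A equals the ℂ-linear span of the set {x·y : x, y ∈ A}. Then A is unital: there exists an element e ∈ A with e·x = x for all x ∈ A. -/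
/-!
Adjoin a unit: `A` becomes an ideal `I` of the commutative ring `ℂ ⊕ A`, finitely generated and,
by perfectness, contained in `I²`. Nakayama's lemma then gives `e ∈ I` with `e • x = x` for all
`x ∈ I`, and such an `e` is a unit of `A`.
-/

abbrev NonUnitalCommRing.ofBilinear {R A : Type*} [CommRing R] [AddCommGroup A] [Module R A]
    (mul : A →ₗ[R] A →ₗ[R] A) (hcomm : ∀ x y : A, mul x y = mul y x)
    (hassoc : ∀ x y z : A, mul (mul x y) z = mul x (mul y z)) : NonUnitalCommRing A where
  __ := ‹AddCommGroup A›
  mul x y := mul x y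
  left_distrib x y z := (mul x).map_add y z
  right_distrib x y z := mul.map_add₂ x y z
  zero_mul x := mul.map_zero₂ x
  mul_zero x := (mul x).map_zero
  mul_assoc := hassoc
  mul_comm := hcomm

namespace Unitization

variable {R A : Type*} [CommRing R] [NonUnitalCommRing A] [Module R A] [IsScalarTower R A A]
  [SMulCommClass R A A]

lemma mem_ker_fstHom_iff {x : Unitization R A} :
    x ∈ RingHom.ker (fstHom R A) ↔ ∃ a : A, inr a = x := by
  rw [RingHom.mem_ker, fstHom_apply]
  exact ⟨fun h => ⟨x.snd, Unitization.ext h.symm rfl⟩, by rintro ⟨a, rfl⟩; exact fst_inr R a⟩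

lemma restrictScalars_ker_fstHom :
    (RingHom.ker (fstHom R A)).restrictScalars R = LinearMap.range (inrHom R R A) := by
  ext x
  exact mem_ker_fstHom_iff

lemma fg_ker_fstHom [Module.Finite R A] : (RingHom.ker (fstHom R A)).FG := by
  refine Submodule.FG.of_restrictScalars R ?_
  rw [restrictScalars_ker_fstHom, LinearMap.range_eq_map]
  exact Module.Finite.fg_top.map _

lemma ker_fstHom_le_mul_self (h : Submodule.span R {u : A | ∃ x y : A, u = x * y} = ⊤) :
    RingHom.ker (fstHom R A) ≤ RingHom.ker (fstHom R A) * RingHom.ker (fstHom R A) := by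
  have hinr (a : A) : inr a ∈ RingHom.ker (fstHom R A) := mem_ker_fstHom_iff.mpr ⟨a, rfl⟩
  intro x hx
  obtain ⟨a, rfl⟩ := mem_ker_fstHom_iff.mp hx
  clear hx
  have ha : a ∈ Submodule.span R {u : A | ∃ x y : A, u = x * y} := h ▸ Submodule.mem_top
  induction ha using Submodule.span_induction with
  | mem u hu =>
    obtain ⟨x, y, rfl⟩ := hu
    rw [inr_mul]
    exact Ideal.mul_mem_mul (hinr x) (hinr y)
  | zero => simp
  | add u v _ _ hu hv => simpa only [inr_add] using add_mem hu hv
  | smul c u _ hu => simpa only [inr_smul] using Submodule.smul_of_tower_mem _ c hu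

end Unitization

theorem NonUnitalCommRing.exists_mul_eq_self_of_span_mul_eq_top {R A : Type*} [CommRing R]
    [NonUnitalCommRing A] [Module R A] [IsScalarTower R A A] [SMulCommClass R A A]
    [Module.Finite R A] (h : Submodule.span R {u : A | ∃ x y : A, u = x * y} = ⊤) :
    ∃ e : A, ∀ x : A, e * x = x := by
  obtain ⟨_, he, hunit⟩ := Submodule.exists_mem_and_smul_eq_self_of_fg_of_le_smul
    (RingHom.ker (Unitization.fstHom R A)) _ Unitization.fg_ker_fstHom
    (Unitization.ker_fstHom_le_mul_self h)
  obtain ⟨e, rfl⟩ := Unitization.mem_ker_fstHom_iff.mp he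
  refine ⟨e, fun x => Unitization.inr_injective (R := R) ?_⟩
  rw [Unitization.inr_mul]
  exact hunit _ (Unitization.mem_ker_fstHom_iff.mpr ⟨x, rfl⟩)

/-- A finite-dimensional perfect commutative associative algebra over ℂ is unital:
if `A = span {x·y}`, then there is an identity element `e`. -/
theorem perfect_comm_assoc_unital {A : Type*} [AddCommGroup A] [Module ℂ A]
    [FiniteDimensional ℂ A]
    (mul : A →ₗ[ℂ] A →ₗ[ℂ] A)
    (hcomm : ∀ x y : A, mul x y = mul y x)
    (hassoc : ∀ x y z : A, mul (mul x y) z = mul x (mul y z))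
    (hperf : Submodule.span ℂ {u : A | ∃ x y : A, u = mul x y} = ⊤) :
    ∃ e : A, ∀ x : A, mul e x = x := by
  let := NonUnitalCommRing.ofBilinear mul hcomm hassoc
  have : IsScalarTower ℂ A A := ⟨fun c x y => mul.map_smul₂ c x y⟩
  have : SMulCommClass ℂ A A := ⟨fun c x y => ((mul x).map_smul c y).symm⟩
  exact NonUnitalCommRing.exists_mul_eq_self_of_span_mul_eq_top hperf
end

section
/- Let P be a commutative post-Lie algebra over ℂ (not assumed finite-dimensional) such that (P, ·) is perfect, i.e., P equals the ℂ-linear span of the set {x·y : x, y ∈ P}, and (P, ·) is centerless, i.e., the only element z ∈ P with z·x = 0 for all x ∈ P is z = 0. Then the Lie bracket is identically zero: {x,y} = 0 for all x, y ∈ P. -/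
/-- If a commutative post-Lie algebra `P` over ℂ has perfect and centerless
commutative part, then the Lie bracket is zero. -/
theorem cpa_perfect_centerless_mul_bracket_eq_zero {P : Type*} [AddCommGroup P] [Module ℂ P]
    (mul br : P →ₗ[ℂ] P →ₗ[ℂ] P)
    (hcomm : ∀ x y : P, mul x y = mul y x)
    (halt : ∀ x : P, br x x = 0)
    (hjac : ∀ x y z : P, br (br x y) z + br (br y z) x + br (br z x) y = 0)
    (hpl1 : ∀ x y z : P, mul (br x y) z = mul x (mul y z) - mul y (mul x z))
    (hpl2 : ∀ x y z : P, mul x (br y z) = br (mul x y) z + br y (mul x z))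
    (hperf : Submodule.span ℂ {u : P | ∃ x y : P, u = mul x y} = ⊤)
    (hcenterless : ∀ z : P, (∀ x : P, mul z x = 0) → z = 0) :
    ∀ x y : P, br x y = 0 := by
  have hanti : ∀ u v : P, br u v = - br v u := by
    intro u v
    have h := halt (u + v)
    simp only [map_add, LinearMap.add_apply, halt, zero_add, add_zero] at h
    linear_combination (norm := module) h
  have key3 : ∀ a b c : P, mul (br a b) (mul c c) = 0 := by
    intro a b c
    have h0 : (mul (br (br b c) a) c) = (mul (br b c) (mul a c)) - (mul a (mul (br b c) c)) := hpl1 (br b c) a c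
    have h1 : (mul (br (br a c) b) c) = (mul (br a c) (mul b c)) - (mul b (mul (br a c) c)) := hpl1 (br a c) b c
    have h2 : (mul (br (br a b) c) c) + (mul (br (br b c) a) c) + (mul (br (br c a) b) c) = 0 := by
      simpa only [map_add, map_sub, map_neg, map_zero, LinearMap.add_apply, LinearMap.sub_apply, LinearMap.neg_apply, LinearMap.zero_apply] using congrArg (fun u => (mul u c)) (hjac a b c)
    have h3 : (mul (br (br a b) c) c) = (mul (br a b) (mul c c)) - (mul c (mul (br a b) c)) := hpl1 (br a b) c c
    have h4 : (mul (br a c) (mul b c)) = (mul a (mul c (mul b c))) - (mul c (mul a (mul b c))) := hpl1 a c (mul b c)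
    have h5 : (mul (br b c) (mul a c)) = (mul b (mul c (mul a c))) - (mul c (mul b (mul a c))) := hpl1 b c (mul a c)
    have h6 : (mul (mul (br a b) c) c) = (mul (mul a (mul b c)) c) - (mul (mul b (mul a c)) c) := by
      simpa only [map_add, map_sub, map_neg, map_zero, LinearMap.add_apply, LinearMap.sub_apply, LinearMap.neg_apply, LinearMap.zero_apply] using congrArg (fun u => (mul u c)) (hpl1 a b c)
    have h7 : (mul (mul b (br a c)) c) = (mul (br (mul b a) c) c) + (mul (br a (mul b c)) c) := by
      simpa only [map_add, map_sub, map_neg, map_zero, LinearMap.add_apply, LinearMap.sub_apply, LinearMap.neg_apply, LinearMap.zero_apply] using congrArg (fun u => (mul u c)) (hpl2 b a c)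
    have h8 : (mul (mul a (br b c)) c) = (mul (br (mul a b) c) c) + (mul (br b (mul a c)) c) := by
      simpa only [map_add, map_sub, map_neg, map_zero, LinearMap.add_apply, LinearMap.sub_apply, LinearMap.neg_apply, LinearMap.zero_apply] using congrArg (fun u => (mul u c)) (hpl2 a b c)
    have h9 : (mul (br (mul a c) b) c) = (mul (mul a c) (mul b c)) - (mul b (mul (mul a c) c)) := hpl1 (mul a c) b c
    have h10 : (mul (br (mul b c) a) c) = (mul (mul b c) (mul a c)) - (mul a (mul (mul b c) c)) := hpl1 (mul b c) a c
    have h11 : (mul (br b c) (br a c)) = (mul b (mul c (br a c))) - (mul c (mul b (br a c))) := hpl1 b c (br a c)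
    have h12 : (mul (br a c) (br b c)) = (mul a (mul c (br b c))) - (mul c (mul a (br b c))) := hpl1 a c (br b c)
    have h13 : (mul (br (br a c) b) c) = -(mul (br (br c a) b) c) := by
      simpa only [map_add, map_sub, map_neg, map_zero, LinearMap.add_apply, LinearMap.sub_apply, LinearMap.neg_apply, LinearMap.zero_apply] using congrArg (fun u => (mul (br u b) c)) (hanti a c)
    have h14 : (mul (br (mul a b) c) c) = (mul (br (mul b a) c) c) := by
      simpa only [map_add, map_sub, map_neg, map_zero, LinearMap.add_apply, LinearMap.sub_apply, LinearMap.neg_apply, LinearMap.zero_apply] using congrArg (fun u => (mul (br u c) c)) (hcomm a b)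
    have h15 : (mul (br (mul b c) a) c) = -(mul (br a (mul b c)) c) := by
      simpa only [map_add, map_sub, map_neg, map_zero, LinearMap.add_apply, LinearMap.sub_apply, LinearMap.neg_apply, LinearMap.zero_apply] using congrArg (fun u => (mul u c)) (hanti (mul b c) a)
    have h16 : (mul (br a c) (br b c)) = (mul (br b c) (br a c)) := hcomm (br a c) (br b c)
    have h17 : (mul (br (mul a c) b) c) = -(mul (br b (mul a c)) c) := by
      simpa only [map_add, map_sub, map_neg, map_zero, LinearMap.add_apply, LinearMap.sub_apply, LinearMap.neg_apply, LinearMap.zero_apply] using congrArg (fun u => (mul u c)) (hanti (mul a c) b)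
    have h18 : (mul (mul (br a b) c) c) = (mul c (mul (br a b) c)) := hcomm (mul (br a b) c) c
    have h19 : (mul (mul a c) (mul b c)) = (mul (mul b c) (mul a c)) := hcomm (mul a c) (mul b c)
    have h20 : (mul (mul (br b c) c) a) = (mul a (mul (br b c) c)) := hcomm (mul (br b c) c) a
    have h21 : (mul (mul c (br b c)) a) = (mul a (mul c (br b c))) := hcomm (mul c (br b c)) a
    have h22 : (mul (mul (br b c) c) a) = (mul (mul c (br b c)) a) := by
      simpa only [map_add, map_sub, map_neg, map_zero, LinearMap.add_apply, LinearMap.sub_apply, LinearMap.neg_apply, LinearMap.zero_apply] using congrArg (fun u => (mul u a)) (hcomm (br b c) c)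
    have h23 : (mul (mul (mul b c) c) a) = (mul a (mul (mul b c) c)) := hcomm (mul (mul b c) c) a
    have h24 : (mul (mul c (mul b c)) a) = (mul a (mul c (mul b c))) := hcomm (mul c (mul b c)) a
    have h25 : (mul (mul (mul b c) c) a) = (mul (mul c (mul b c)) a) := by
      simpa only [map_add, map_sub, map_neg, map_zero, LinearMap.add_apply, LinearMap.sub_apply, LinearMap.neg_apply, LinearMap.zero_apply] using congrArg (fun u => (mul u a)) (hcomm (mul b c) c)
    have h26 : (mul (mul (br a c) c) b) = (mul b (mul (br a c) c)) := hcomm (mul (br a c) c) b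
    have h27 : (mul (mul c (br a c)) b) = (mul b (mul c (br a c))) := hcomm (mul c (br a c)) b
    have h28 : (mul (mul (br a c) c) b) = (mul (mul c (br a c)) b) := by
      simpa only [map_add, map_sub, map_neg, map_zero, LinearMap.add_apply, LinearMap.sub_apply, LinearMap.neg_apply, LinearMap.zero_apply] using congrArg (fun u => (mul u b)) (hcomm (br a c) c)
    have h29 : (mul (mul (mul a c) c) b) = (mul b (mul (mul a c) c)) := hcomm (mul (mul a c) c) b
    have h30 : (mul (mul c (mul a c)) b) = (mul b (mul c (mul a c))) := hcomm (mul c (mul a c)) b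
    have h31 : (mul (mul (mul a c) c) b) = (mul (mul c (mul a c)) b) := by
      simpa only [map_add, map_sub, map_neg, map_zero, LinearMap.add_apply, LinearMap.sub_apply, LinearMap.neg_apply, LinearMap.zero_apply] using congrArg (fun u => (mul u b)) (hcomm (mul a c) c)
    have h32 : (mul (mul b (br a c)) c) = (mul c (mul b (br a c))) := hcomm (mul b (br a c)) c
    have h33 : (mul (mul a (br b c)) c) = (mul c (mul a (br b c))) := hcomm (mul a (br b c)) c
    have h34 : (mul (mul b (mul a c)) c) = (mul c (mul b (mul a c))) := hcomm (mul b (mul a c)) c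
    have h35 : (mul (mul a (mul b c)) c) = (mul c (mul a (mul b c))) := hcomm (mul a (mul b c)) c
    linear_combination (norm := module) - h0 + h1 + h2 - h3 + h4 - h5 + h6 - h7 + h8 - h9 + h10 + h11 - h12 - h13 + h14 - h15 + h16 + h17 - h18 - h19 - h20 + h21 + h22 + h23 - h24 - h25 + h26 - h27 - h28 - h29 + h30 + h31 + h32 - h33 - h34 + h35
  have key : ∀ a b c d : P, mul (br a b) (mul c d) = 0 := by
    intro a b c d
    have h := key3 a b (c + d)
    have e1 : mul (c + d) (c + d)
        = mul c c + mul c d + mul c d + mul d d := by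
      have e2 := hcomm c d
      simp only [map_add, LinearMap.add_apply]
      linear_combination (norm := module) -e2
    rw [e1] at h
    simp only [map_add, key3 a b c, key3 a b d, add_zero, zero_add] at h
    have h2 : (2:ℂ) • mul (br a b) (mul c d) = 0 := by
      linear_combination (norm := module) h
    have h3 : (2:ℂ) • mul (br a b) (mul c d) = (2:ℂ) • (0:P) := by
      rw [smul_zero]; exact h2
    exact smul_right_injective P (by norm_num : (2:ℂ) ≠ 0) h3
  intro x y
  apply hcenterless
  intro z
  have hz : z ∈ Submodule.span ℂ {u : P | ∃ x y : P, u = mul x y} := by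
    rw [hperf]; trivial
  induction hz using Submodule.span_induction with
  | mem u hu =>
    obtain ⟨c, d, rfl⟩ := hu
    exact key x y c d
  | zero => simp
  | add u v _ _ hu hv => rw [map_add, hu, hv, add_zero]
  | smul a u _ hu => rw [map_smul, hu, smul_zero]
end

section
/- Let (P, ·) be a ℂ-vector space with an arbitrary bilinear multiplication ·, and define two new operations on P by x∘y := (1/2)(x·y + y·x) and [x,y] := (1/2)(x·y − y·x). Then (P, ∘, [·,·]) is a commutative post-Lie algebra (in particular, [·,·] satisfies the Jacobi identity) if and only if for all x, y, z ∈ P the following two identities hold: A(x,y,z) := (x·y)·z − x·(z·y) + z·(x·y) − (z·y)·x = 0 and B(x,y,z) := (y·z)·x − 2 y·(z·x) + 2 z·(y·x) − (z·y)·x = 0. -/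
/-- **Depolarization of commutative post-Lie algebras.**
Given an arbitrary bilinear multiplication `mul` on a ℂ-vector space `P`, define
`x ∘ y := ½(x·y + y·x)` and `[x,y] := ½(x·y − y·x)`. Then `(P, ∘, [·,·])` is a
commutative post-Lie algebra if and only if the identities
`A(x,y,z) := (x·y)·z − x·(z·y) + z·(x·y) − (z·y)·x = 0` and
`B(x,y,z) := (y·z)·x − 2y·(z·x) + 2z·(y·x) − (z·y)·x = 0` hold. -/
theorem cpa_depolarization {P : Type*} [AddCommGroup P] [Module ℂ P]
    (mul : P →ₗ[ℂ] P →ₗ[ℂ] P)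
    (circ lb : P → P → P)
    (hcirc : ∀ x y : P, circ x y = ((2 : ℂ)⁻¹) • (mul x y + mul y x))
    (hlb : ∀ x y : P, lb x y = ((2 : ℂ)⁻¹) • (mul x y - mul y x)) :
    ((∀ x y : P, circ x y = circ y x) ∧
     (∀ x : P, lb x x = 0) ∧
     (∀ x y z : P, lb (lb x y) z + lb (lb y z) x + lb (lb z x) y = 0) ∧
     (∀ x y z : P, circ (lb x y) z = circ x (circ y z) - circ y (circ x z)) ∧
     (∀ x y z : P, circ x (lb y z) = lb (circ x y) z + lb y (circ x z)))
    ↔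
    ((∀ x y z : P,
        mul (mul x y) z - mul x (mul z y) + mul z (mul x y) - mul (mul z y) x = 0) ∧
     (∀ x y z : P,
        mul (mul y z) x - (2 : ℂ) • mul y (mul z x) + (2 : ℂ) • mul z (mul y x)
          - mul (mul z y) x = 0)) := by
  constructor
  · rintro ⟨-, -, hJ, h4, h5⟩
    simp only [hcirc, hlb, map_smul, map_add, map_sub, LinearMap.smul_apply,
      LinearMap.add_apply, LinearMap.sub_apply, smul_add, smul_sub, smul_smul] at hJ h4 h5
    constructor
    · intro x y z
      linear_combination (norm := module) (2 : ℂ) • h4 x y z + (2 : ℂ) • h4 y z x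
    · intro x y z
      linear_combination (norm := module) (-2 : ℂ) • h4 x y z + (2 : ℂ) • h4 x z y
        + (2 : ℂ) • h5 x y z + (2 : ℂ) • hJ x y z
  · rintro ⟨hA, hB⟩
    refine ⟨?_, ?_, ?_, ?_, ?_⟩
    · intro x y
      rw [hcirc, hcirc]
      module
    · intro x
      rw [hlb]
      simp
    · intro x y z
      simp only [hcirc, hlb, map_smul, map_add, map_sub, LinearMap.smul_apply,
        LinearMap.add_apply, LinearMap.sub_apply, smul_add, smul_sub, smul_smul]
      linear_combination (norm := module) ((1:ℂ)/12) • hA x y z + (-(1:ℂ)/12) • hA x z y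
        + (-(1:ℂ)/12) • hA y x z + ((1:ℂ)/6) • hB x y z + (-(1:ℂ)/6) • hB y x z
        + ((1:ℂ)/6) • hB z x y
    · intro x y z
      simp only [hcirc, hlb, map_smul, map_add, map_sub, LinearMap.smul_apply,
        LinearMap.add_apply, LinearMap.sub_apply, smul_add, smul_sub, smul_smul]
      linear_combination (norm := module) ((1:ℂ)/4) • hA x y z + ((1:ℂ)/4) • hA x z y
        + (-(1:ℂ)/4) • hA y x z
    · intro x y z
      simp only [hcirc, hlb, map_smul, map_add, map_sub, LinearMap.smul_apply,
        LinearMap.add_apply, LinearMap.sub_apply, smul_add, smul_sub, smul_smul]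
      linear_combination (norm := module) (-(1:ℂ)/12) • hA x y z + ((1:ℂ)/12) • hA x z y
        + (-(5:ℂ)/12) • hA y x z + ((1:ℂ)/3) • hB x y z + ((1:ℂ)/6) • hB y x z
        + (-(1:ℂ)/6) • hB z x y
end

section
/- There exists a 2-dimensional algebra over ℂ satisfying the identity A but not the identity B; concretely, the algebra Q with basis e₁, e₂ and multiplication e₁·e₁ = e₁, e₁·e₂ = e₂, e₂·e₁ = −e₂ (all other basis products zero) satisfies A(x,y,z) = 0 for all x, y, z ∈ Q, but there exist x, y, z ∈ Q with B(x,y,z) ≠ 0. -/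
/-- There is a 2-dimensional algebra over ℂ satisfying identity
`A(x,y,z) := (x·y)·z − x·(z·y) + z·(x·y) − (z·y)·x = 0` but not identity
`B(x,y,z) := (y·z)·x − 2y·(z·x) + 2z·(y·x) − (z·y)·x = 0`: namely the algebra
on `ℂ²` with `e₁·e₁ = e₁`, `e₁·e₂ = e₂`, `e₂·e₁ = −e₂`, `e₂·e₂ = 0`. -/
theorem exists_algebra_A_not_B :
    ∃ mul : (Fin 2 → ℂ) → (Fin 2 → ℂ) → (Fin 2 → ℂ),
      (∀ (c : ℂ) (x y z : Fin 2 → ℂ), mul (c • x + y) z = c • mul x z + mul y z) ∧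
      (∀ (c : ℂ) (x y z : Fin 2 → ℂ), mul z (c • x + y) = c • mul z x + mul z y) ∧
      mul ![1, 0] ![1, 0] = ![1, 0] ∧
      mul ![1, 0] ![0, 1] = ![0, 1] ∧
      mul ![0, 1] ![1, 0] = -![0, 1] ∧
      mul ![0, 1] ![0, 1] = 0 ∧
      (∀ x y z : Fin 2 → ℂ,
        mul (mul x y) z - mul x (mul z y) + mul z (mul x y) - mul (mul z y) x = 0) ∧
      (∃ x y z : Fin 2 → ℂ,
        mul (mul y z) x - (2 : ℂ) • mul y (mul z x) + (2 : ℂ) • mul z (mul y x)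
          - mul (mul z y) x ≠ 0) := by
  refine ⟨fun x y => ![x 0 * y 0, x 0 * y 1 - x 1 * y 0], ?_, ?_, ?_, ?_, ?_, ?_, ?_, ?_⟩
  · intro c x y z
    funext i
    fin_cases i <;> simp [Matrix.cons_val_zero, Matrix.cons_val_one] <;> ring
  · intro c x y z
    funext i
    fin_cases i <;> simp [Matrix.cons_val_zero, Matrix.cons_val_one] <;> ring
  · funext i; fin_cases i <;> simp
  · funext i; fin_cases i <;> simp
  · funext i; fin_cases i <;> simp
  · funext i; fin_cases i <;> simp
  · intro x y z
    funext i
    fin_cases i <;> simp [Matrix.cons_val_zero, Matrix.cons_val_one] <;> ring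
  · refine ⟨![1, 0], ![1, 0], ![0, 1], fun h => ?_⟩
    have := congrFun h 1
    norm_num at this
end

section
/- Let P be a commutative post-Lie algebra over ℂ, V a ℂ-vector space, θ : P × P → V a symmetric bilinear map, and ϑ : P × P → V an alternating bilinear map satisfying ϑ({x,y},z) + ϑ({y,z},x) + ϑ({z,x},y) = 0 for all x, y, z ∈ P. Assume the cocycle conditions: θ({x,y},z) = θ(x, y·z) − θ(y, x·z) and θ(x, {y,z}) = ϑ(x·y, z) + ϑ(y, x·z) for all x, y, z ∈ P. Then the vector space P × V equipped with the commutative multiplication (x,u)·(y,v) := (x·y, θ(x,y)) and the bracket {(x,u),(y,v)} := ({x,y}, ϑ(x,y)) is again a commutative post-Lie algebra. -/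
/-- **Annihilator extensions of commutative post-Lie algebras.**
Let `P` be a commutative post-Lie algebra over ℂ, `V` a ℂ-vector space, and
`(θ, ϑ)` a cocycle on `P` with values in `V`. Then `P × V` with the products
`(x,u)·(y,v) = (x·y, θ x y)` and `{(x,u),(y,v)} = ({x,y}, ϑ x y)` is again a
commutative post-Lie algebra. -/
theorem cpa_annihilator_extension {P V : Type*}
    [AddCommGroup P] [Module ℂ P] [AddCommGroup V] [Module ℂ V]
    (mul br : P →ₗ[ℂ] P →ₗ[ℂ] P)
    (hcomm : ∀ x y : P, mul x y = mul y x)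
    (halt : ∀ x : P, br x x = 0)
    (hjac : ∀ x y z : P, br (br x y) z + br (br y z) x + br (br z x) y = 0)
    (hpl1 : ∀ x y z : P, mul (br x y) z = mul x (mul y z) - mul y (mul x z))
    (hpl2 : ∀ x y z : P, mul x (br y z) = br (mul x y) z + br y (mul x z))
    (θ ϑ : P →ₗ[ℂ] P →ₗ[ℂ] V)
    (hθsymm : ∀ x y : P, θ x y = θ y x)
    (hϑalt : ∀ x : P, ϑ x x = 0)
    (hϑjac : ∀ x y z : P, ϑ (br x y) z + ϑ (br y z) x + ϑ (br z x) y = 0)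
    (hcoc1 : ∀ x y z : P, θ (br x y) z = θ x (mul y z) - θ y (mul x z))
    (hcoc2 : ∀ x y z : P, θ x (br y z) = ϑ (mul x y) z + ϑ y (mul x z)) :
    ∀ mul' br' : P × V → P × V → P × V,
      (∀ p q : P × V, mul' p q = (mul p.1 q.1, θ p.1 q.1)) →
      (∀ p q : P × V, br' p q = (br p.1 q.1, ϑ p.1 q.1)) →
      (∀ p q : P × V, mul' p q = mul' q p) ∧
      (∀ p : P × V, br' p p = 0) ∧
      (∀ p q r : P × V, br' (br' p q) r + br' (br' q r) p + br' (br' r p) q = 0) ∧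
      (∀ p q r : P × V, mul' (br' p q) r = mul' p (mul' q r) - mul' q (mul' p r)) ∧
      (∀ p q r : P × V, mul' p (br' q r) = br' (mul' p q) r + br' q (mul' p r)) := by
  intro mul' br' hmul hbr
  refine ⟨fun p q => ?_, fun p => ?_, fun p q r => ?_, fun p q r => ?_, fun p q r => ?_⟩
  · simp [hmul, hcomm, hθsymm]
  · simp [hbr, halt, hϑalt, Prod.ext_iff]
  · simp [hbr, Prod.ext_iff, hjac, hϑjac]
  · simp [hmul, hbr, Prod.ext_iff, hpl1, hcoc1]
  · simp [hmul, hbr, Prod.ext_iff, hpl2, hcoc2]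
end
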